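/- arXiv:0909.0931 — 10 statements merged into one kernel-verified Lean document; each statement's English description precedes it below -/
import Mathlib

section
/- Necessity of the perfect QEC (Knill–Laflamme) conditions: Suppose there exists a finite Kraus family {R_j}_{j∈J} of n×n complex matrices with ∑_j R_jᴴ R_j = 1 such that ∑_{j∈J} ∑_{i∈I} R_j E_i ρ E_iᴴ R_jᴴ = ρ for every n×n matrix ρ satisfying P ρ P = ρ. Then there exists a matrix of complex coefficients α : I × I → ℂ such that P E_iᴴ E_j P = α i j • P for all i, j ∈ I. -/
/-!
The channel `X ↦ ∑ⱼ ∑ᵢ (Rⱼ Eᵢ P) X (Rⱼ Eᵢ P)ᴴ` is, by perfect recovery, the compression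
`X ↦ P X P`. A rank-one Gram identity `⟪vₓ, v_y⟫ = conj aₓ * a_y` forces `vₓ = aₓ • u`; applied to
the vectors `(Bₖ p a)ₖ` of entries of the Kraus operators `Bₖ = Rⱼ Eᵢ P`, it shows that every
`Rⱼ Eᵢ P` is a scalar multiple `c (j, i) • P`. Since `∑ⱼ Rⱼᴴ Rⱼ = 1`, it follows that
`P Eᵢᴴ Eⱼ P = ∑ₖ (Rₖ Eᵢ P)ᴴ (Rₖ Eⱼ P) = (∑ₖ conj (c (k, i)) * c (k, j)) • P`.
-/

open Matrix ComplexConjugate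

theorem exists_forall_eq_smul_of_inner_eq_conj_mul {𝕜 E ι : Type*} [RCLike 𝕜]
    [NormedAddCommGroup E] [InnerProductSpace 𝕜 E] {v : ι → E} {a : ι → 𝕜}
    (h : ∀ x y, inner 𝕜 (v x) (v y) = conj (a x) * a y) :
    ∃ u : E, ∀ x, v x = a x • u := by
  by_cases ha : ∃ x₀, a x₀ ≠ 0
  · obtain ⟨x₀, hx₀⟩ := ha
    refine ⟨(a x₀)⁻¹ • v x₀, fun x => ?_⟩
    rw [smul_smul]
    set w := v x - (a x * (a x₀)⁻¹) • v x₀ with hw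
    have horth : ∀ y, inner 𝕜 (v y) w = 0 := by
      intro y
      rw [inner_sub_right, inner_smul_right, h, h]
      field_simp
      ring
    -- `w` lies in the span of the `v y` and is orthogonal to all of them.
    have hww : inner 𝕜 w w = (0 : 𝕜) := by
      conv_lhs => enter [2]; rw [hw]
      rw [inner_sub_left, inner_smul_left, horth, horth, mul_zero, sub_zero]
    exact sub_eq_zero.mp (inner_self_eq_zero.mp hww)
  · push Not at ha
    exact ⟨0, fun x => by simpa [ha] using h x x⟩

namespace Matrix

variable {𝕜 : Type*} [RCLike 𝕜]

theorem mul_single_one_mul_conjTranspose_apply {l m n : Type*} [Fintype n] [DecidableEq n]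
    (M : Matrix l n 𝕜) (N : Matrix m n 𝕜) (a b : n) (p : l) (q : m) :
    (M * single a b (1 : 𝕜) * Nᴴ) p q = M p a * conj (N q b) := by
  simp [mul_apply, single_apply, ite_and]

theorem exists_eq_smul_of_sum_mul_mul_conjTranspose_eq {K m n : Type*} [Fintype K] [Fintype n]
    [DecidableEq n] {B : K → Matrix m n 𝕜} {A : Matrix m n 𝕜}
    (h : ∀ X : Matrix n n 𝕜, ∑ k, B k * X * (B k)ᴴ = A * X * Aᴴ) :
    ∃ c : K → 𝕜, ∀ k, B k = c k • A := by
  have hgram : ∀ x y : m × n,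
      inner 𝕜 (WithLp.toLp 2 fun k => B k x.1 x.2 : EuclideanSpace 𝕜 K)
        (WithLp.toLp 2 fun k => B k y.1 y.2) = conj (A x.1 x.2) * A y.1 y.2 := by
    intro x y
    have hentry := congr_fun₂ (h (single y.2 x.2 1)) y.1 x.1
    simp only [sum_apply, mul_single_one_mul_conjTranspose_apply] at hentry
    simpa [PiLp.inner_apply, mul_comm] using hentry
  obtain ⟨u, hu⟩ := exists_forall_eq_smul_of_inner_eq_conj_mul hgram
  refine ⟨u, fun k => ext fun p a => ?_⟩
  simpa [mul_comm] using congr_arg (· k) (hu (p, a))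

variable {I J n : Type*} [Fintype I] [Fintype J] [Fintype n]

theorem sum_mul_mul_conjTranspose_eq_compress {E : I → Matrix n n 𝕜} {R : J → Matrix n n 𝕜}
    {P : Matrix n n 𝕜} (hP1 : P * P = P) (hP2 : Pᴴ = P)
    (hrec : ∀ ρ, P * ρ * P = ρ → ∑ j, ∑ i, R j * E i * ρ * (E i)ᴴ * (R j)ᴴ = ρ)
    (X : Matrix n n 𝕜) :
    ∑ k : J × I, R k.1 * E k.2 * P * X * (R k.1 * E k.2 * P)ᴴ = P * X * Pᴴ := by
  have hcode : P * (P * X * P) * P = P * X * P := by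
    simp only [← Matrix.mul_assoc, hP1]
    simp only [Matrix.mul_assoc, hP1]
  rw [Fintype.sum_prod_type, hP2, ← hrec _ hcode]
  simp only [conjTranspose_mul, hP2, Matrix.mul_assoc]

theorem sum_conjTranspose_mul_eq_of_sum_conjTranspose_mul_self [DecidableEq n]
    {R : J → Matrix n n 𝕜} (hR : ∑ j, (R j)ᴴ * R j = 1) (F G P : Matrix n n 𝕜) :
    ∑ j, (R j * F * P)ᴴ * (R j * G * P) = Pᴴ * Fᴴ * G * P :=
  calc ∑ j, (R j * F * P)ᴴ * (R j * G * P)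
      = ∑ j, Pᴴ * Fᴴ * ((R j)ᴴ * R j) * (G * P) := by
        simp only [conjTranspose_mul, Matrix.mul_assoc]
    _ = Pᴴ * Fᴴ * (∑ j, (R j)ᴴ * R j) * (G * P) := by rw [Finset.mul_sum, Finset.sum_mul]
    _ = Pᴴ * Fᴴ * G * P := by rw [hR, Matrix.mul_one, ← Matrix.mul_assoc]

end Matrix

theorem perfect_QEC_conditions_necessary_general
    {n : ℕ} {I J : Type*} [Fintype I] [Fintype J]
    (E : I → Matrix (Fin n) (Fin n) ℂ) (R : J → Matrix (Fin n) (Fin n) ℂ)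
    (P : Matrix (Fin n) (Fin n) ℂ)
    (hP1 : P * P = P) (hP2 : Pᴴ = P)
    (hRTP : ∑ j, (R j)ᴴ * R j = 1)
    (hrec : ∀ ρ : Matrix (Fin n) (Fin n) ℂ, P * ρ * P = ρ →
      ∑ j, ∑ i, R j * E i * ρ * (E i)ᴴ * (R j)ᴴ = ρ) :
    ∃ α : I → I → ℂ, ∀ i j, P * (E i)ᴴ * E j * P = α i j • P := by
  obtain ⟨c, hc⟩ := exists_eq_smul_of_sum_mul_mul_conjTranspose_eq
    (sum_mul_mul_conjTranspose_eq_compress hP1 hP2 hrec)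
  replace hc : ∀ j i, R j * E i * P = c (j, i) • P := fun j i => hc (j, i)
  have hPP : Pᴴ * P = P := by rw [hP2, hP1]
  refine ⟨fun i j => ∑ k, conj (c (k, i)) * c (k, j), fun i j => ?_⟩
  calc P * (E i)ᴴ * E j * P = ∑ k, (R k * E i * P)ᴴ * (R k * E j * P) := by
        rw [sum_conjTranspose_mul_eq_of_sum_conjTranspose_mul_self hRTP, hP2]
    _ = (∑ k, conj (c (k, i)) * c (k, j)) • P := by
        simp only [hc, conjTranspose_smul, smul_mul_smul_comm, hPP, Finset.sum_smul,
          Complex.star_def]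

/-- Necessity of the perfect QEC (Knill–Laflamme) conditions: if there exists a
trace-preserving recovery `{R_j}` that perfectly corrects the TP noise `{E_i}` on the
code subspace of the orthogonal projection `P`, then `P Eᵢᴴ Eⱼ P = α i j • P` for some
complex matrix `α`. -/
theorem perfect_QEC_conditions_necessary
    {n : ℕ} {I J : Type*} [Fintype I] [Fintype J]
    (E : I → Matrix (Fin n) (Fin n) ℂ) (R : J → Matrix (Fin n) (Fin n) ℂ)
    (P : Matrix (Fin n) (Fin n) ℂ)
    (hP1 : P * P = P) (hP2 : Pᴴ = P) (hP0 : P ≠ 0)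
    (hTP : ∑ i, (E i)ᴴ * E i = 1)
    (hRTP : ∑ j, (R j)ᴴ * R j = 1)
    (hrec : ∀ ρ : Matrix (Fin n) (Fin n) ℂ, P * ρ * P = ρ →
      ∑ j, ∑ i, R j * E i * ρ * (E i)ᴴ * (R j)ᴴ = ρ) :
    ∃ α : I → I → ℂ, ∀ i j, P * (E i)ᴴ * E j * P = α i j • P :=
  perfect_QEC_conditions_necessary_general E R P hP1 hP2 hRTP hrec
end

section
/- Diagonalization of the perfect QEC conditions: Let {E_i}_{i∈Fin N} be a Kraus family of n×n complex matrices and P a nonzero orthogonal projection such that P E_iᴴ E_j P = α i j • P for some α : Fin N × Fin N → ℂ. Then the N×N matrix α is Hermitian and positive semidefinite, and there exist a unitary N×N complex matrix u and nonnegative reals d_k (the eigenvalues of α) such that the operators F_k := ∑_{i} (u i k) • E_i satisfy P F_kᴴ F_l P = (if k = l then d_k else 0) • P for all k, l. -/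
/-!
Writing `F_v = ∑ i, v i • E i`, the conditions give `P * F_vᴴ * F_w * P = (star v ⬝ᵥ α *ᵥ w) • P`,
so rotating the Kraus operators by `u` replaces `α` with `uᴴ * α * u`. Taking `ᴴ` of the conditions
shows that `α` is Hermitian, and `(star v ⬝ᵥ α *ᵥ v) • P = (F_v P)ᴴ (F_v P)` is positive
semidefinite, which forces `star v ⬝ᵥ α *ᵥ v ≥ 0` because `P` has positive trace.
A unitary eigenbasis of `α` therefore diagonalizes the conditions.
-/

open Matrix
open scoped ComplexOrder

namespace Matrix

variable {m ι R : Type*} [Fintype m]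

/-- The perfect QEC (Knill–Laflamme) conditions for the Kraus operators `E` on the code space
with projection `P`, with coefficient matrix `α`. -/
def KnillLaflamme [Semiring R] [Star R] (P : Matrix m m R) (E : ι → Matrix m m R)
    (α : Matrix ι ι R) : Prop :=
  ∀ i j, P * (E i)ᴴ * E j * P = α i j • P

theorem nonneg_of_smul_posSemidef {𝕜 : Type*} [RCLike 𝕜] {P : Matrix m m 𝕜} {c : 𝕜}
    (hP : P.PosSemidef) (hP0 : P ≠ 0) (hcP : (c • P).PosSemidef) : 0 ≤ c := by
  have htr : 0 < P.trace := hP.trace_nonneg.lt_of_ne (Ne.symm (hP.trace_eq_zero_iff.not.mpr hP0))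
  refine le_of_mul_le_mul_right ?_ htr
  simpa [trace_smul] using hcP.trace_nonneg

namespace KnillLaflamme

section CommRing

variable [Fintype ι] [CommRing R] [StarRing R] {P : Matrix m m R} {E : ι → Matrix m m R}
  {α : Matrix ι ι R}

theorem sum_smul (h : KnillLaflamme P E α) (v w : ι → R) :
    P * (∑ i, v i • E i)ᴴ * (∑ i, w i • E i) * P = (star v ⬝ᵥ α *ᵥ w) • P := by
  simp only [conjTranspose_sum, conjTranspose_smul, Matrix.sum_mul, Matrix.mul_sum,
    Matrix.smul_mul, Matrix.mul_smul]
  unfold KnillLaflamme at h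
  simp only [h, smul_smul, ← Finset.sum_smul]
  congr 1
  simp only [dotProduct, mulVec, Finset.mul_sum, Pi.star_apply]
  rw [Finset.sum_comm]
  exact Finset.sum_congr rfl fun i _ ↦ Finset.sum_congr rfl fun j _ ↦ by ring

theorem rotate (h : KnillLaflamme P E α) (u : Matrix ι ι R) :
    KnillLaflamme P (fun k ↦ ∑ i, u i k • E i) (uᴴ * α * u) := fun k l ↦ by
  rw [h.sum_smul, mul_mul_apply]
  rfl

end CommRing

theorem isHermitian [Field R] [StarRing R] {P : Matrix m m R} {E : ι → Matrix m m R}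
    {α : Matrix ι ι R} (h : KnillLaflamme P E α) (hP : Pᴴ = P) (hP0 : P ≠ 0) :
    α.IsHermitian := by
  ext i j
  apply smul_left_injective R hP0
  have hji := congrArg conjTranspose (h j i)
  simp only [conjTranspose_mul, conjTranspose_conjTranspose, conjTranspose_smul, hP] at hji
  simp only [conjTranspose_apply, ← hji, ← h i j, Matrix.mul_assoc]

theorem posSemidef [Fintype ι] {𝕜 : Type*} [RCLike 𝕜] {P : Matrix m m 𝕜}
    {E : ι → Matrix m m 𝕜} {α : Matrix ι ι 𝕜} (h : KnillLaflamme P E α) (hPP : P * P = P)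
    (hP : Pᴴ = P) (hP0 : P ≠ 0) : α.PosSemidef := by
  have hPpos : P.PosSemidef := by simpa [hP, hPP] using posSemidef_conjTranspose_mul_self P
  refine .of_dotProduct_mulVec_nonneg (h.isHermitian hP hP0) fun v ↦
    nonneg_of_smul_posSemidef hPpos hP0 ?_
  rw [← h.sum_smul v v]
  simpa [hP, Matrix.mul_assoc] using
    (posSemidef_conjTranspose_mul_self (∑ i, v i • E i)).conjTranspose_mul_mul_same P

end KnillLaflamme

end Matrix

/-- Diagonalization of the perfect QEC conditions: if `P E_iᴴ E_j P = α i j • P`, then the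
matrix `α` is Hermitian and positive semidefinite, and there exist a unitary `u` and
nonnegative reals `d_k` (the eigenvalues of `α`, i.e. `α = u D uᴴ` with `D = diagonal d`)
such that the rotated Kraus operators `F_k := ∑ i, u i k • E i` satisfy the QEC conditions
in diagonal form. -/
theorem perfect_QEC_conditions_diagonalization
    {n N : ℕ} (E : Fin N → Matrix (Fin n) (Fin n) ℂ)
    (P : Matrix (Fin n) (Fin n) ℂ) (α : Matrix (Fin N) (Fin N) ℂ)
    (hP1 : P * P = P) (hP2 : Pᴴ = P) (hP0 : P ≠ 0)
    (hQEC : ∀ i j, P * (E i)ᴴ * E j * P = α i j • P) :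
    α.IsHermitian ∧ α.PosSemidef ∧
    ∃ (u : Matrix (Fin N) (Fin N) ℂ) (d : Fin N → ℝ),
      u ∈ Matrix.unitaryGroup (Fin N) ℂ ∧
      (∀ k, 0 ≤ d k) ∧
      α = u * Matrix.diagonal (fun k => (d k : ℂ)) * uᴴ ∧
      (∀ k l, P * (∑ i, u i k • E i)ᴴ * (∑ i, u i l • E i) * P
        = (if k = l then (d k : ℂ) else 0) • P) := by
  have hKL : KnillLaflamme P E α := hQEC
  have hH := hKL.isHermitian hP2 hP0
  have hPSD := hKL.posSemidef hP1 hP2 hP0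
  have hdiag := hH.conjStarAlgAut_star_eigenvectorUnitary
  have hspec := hH.spectral_theorem
  rw [Unitary.conjStarAlgAut_star_apply, star_eq_conjTranspose] at hdiag
  rw [Unitary.conjStarAlgAut_apply, star_eq_conjTranspose] at hspec
  refine ⟨hH, hPSD, hH.eigenvectorUnitary, hH.eigenvalues, hH.eigenvectorUnitary.2,
    hPSD.eigenvalues_nonneg, hspec, fun k l ↦ ?_⟩
  rw [hKL.rotate _ k l, hdiag, diagonal_apply]
  rfl
end

section
/- Orthogonality of the error subspaces: Let {F_k}_{k∈K} be a finite Kraus family, P a nonzero orthogonal projection, d_k > 0 reals with P F_kᴴ F_l P = (if k = l then d_k else 0) • P for all k, l, and U_k unitary matrices with F_k P = (√d_k) • (U_k P). Then P U_kᴴ U_l P = (if k = l then 1 else 0) • P for all k, l; consequently the matrices P_k := U_k P U_kᴴ are orthogonal projections (P_k² = P_k = P_kᴴ) satisfying P_k P_l = 0 whenever k ≠ l. -/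
open Matrix

/-!
Since `P` is self-adjoint, `P F_kᴴ F_l P = (F_k P)ᴴ (F_l P)`, and the polar decompositions turn this
into `√d_k √d_l • P U_kᴴ U_l P`. Comparing with the QEC conditions and cancelling the positive
scalar `√d_k √d_l` gives `P U_kᴴ U_l P = δ_{kl} P`. Conjugating by `U_k` then shows that the
`U_k P U_kᴴ` are self-adjoint idempotents with pairwise zero products.
-/

lemma isIdempotentElem_mul_mul_star {A : Type*} [Semigroup A] [StarMul A] {P U : A}
    (h : P * star U * U * P = P) :
    IsIdempotentElem (U * P * star U) :=
  calc U * P * star U * (U * P * star U) = U * (P * star U * U * P) * star U := by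
        simp only [mul_assoc]
    _ = U * P * star U := by rw [h]

lemma mul_mul_star_mul_mul_mul_star_eq_zero {A : Type*} [SemigroupWithZero A] [StarMul A]
    {P U V : A} (h : P * star U * V * P = 0) :
    U * P * star U * (V * P * star V) = 0 :=
  calc U * P * star U * (V * P * star V) = U * (P * star U * V * P) * star V := by
        simp only [mul_assoc]
    _ = 0 := by rw [h, mul_zero, zero_mul]

section Polar

variable {R A : Type*} [CommSemiring R] [StarRing R] [Semiring A] [StarRing A] [Algebra R A]
  [StarModule R A]

lemma IsSelfAdjoint.mul_star_mul_mul_of_mul_eq_smul {P F G U V : A} {a b : R}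
    (hP : IsSelfAdjoint P) (hF : F * P = a • (U * P)) (hG : G * P = b • (V * P)) :
    P * star F * G * P = (star a * b) • (P * star U * V * P) :=
  calc P * star F * G * P = star (F * P) * (G * P) := by
        rw [star_mul, hP.star_eq]; simp only [mul_assoc]
    _ = (star a * b) • (P * star U * V * P) := by
        rw [hF, hG, star_smul, star_mul, hP.star_eq, smul_mul_smul_comm]; simp only [mul_assoc]

end Polar

lemma ite_ofReal_eq_sqrt_mul_sqrt_mul_ite {K : Type*} [DecidableEq K] {d : K → ℝ}
    (hd : ∀ k, 0 ≤ d k) (k l : K) :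
    (if k = l then (d k : ℂ) else 0) =
      ((√(d k) * √(d l) : ℝ) : ℂ) * (if k = l then 1 else 0) := by
  split_ifs with hkl
  · subst hkl; rw [Real.mul_self_sqrt (hd k), mul_one]
  · rw [mul_zero]

lemma mul_star_mul_mul_eq_ite_of_polar {A K : Type*} [Ring A] [StarRing A] [Algebra ℂ A]
    [StarModule ℂ A] [DecidableEq K] {F U : K → A} {P : A} {d : K → ℝ} (hP : IsSelfAdjoint P)
    (hd : ∀ k, 0 < d k)
    (hQEC : ∀ k l, P * star (F k) * F l * P = (if k = l then (d k : ℂ) else 0) • P)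
    (hpolar : ∀ k, F k * P = (√(d k) : ℂ) • (U k * P)) (k l : K) :
    P * star (U k) * U l * P = (if k = l then (1 : ℂ) else 0) • P := by
  have hscalar : ((√(d k) * √(d l) : ℝ) : ℂ) ≠ 0 := by
    exact_mod_cast (mul_pos (Real.sqrt_pos.2 (hd k)) (Real.sqrt_pos.2 (hd l))).ne'
  refine smul_right_injective A hscalar ?_
  have h := (hP.mul_star_mul_mul_of_mul_eq_smul (hpolar k) (hpolar l)).symm.trans (hQEC k l)
  rw [Complex.star_def, Complex.conj_ofReal, ← Complex.ofReal_mul,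
    ite_ofReal_eq_sqrt_mul_sqrt_mul_ite (fun k => (hd k).le), mul_smul] at h
  exact h

theorem error_subspaces_orthogonal_general
    {n : ℕ} {K : Type*} [DecidableEq K]
    (F : K → Matrix (Fin n) (Fin n) ℂ) (U : K → Matrix (Fin n) (Fin n) ℂ)
    (P : Matrix (Fin n) (Fin n) ℂ) (d : K → ℝ)
    (hP2 : Pᴴ = P)
    (hd : ∀ k, 0 < d k)
    (hQEC : ∀ k l, P * (F k)ᴴ * F l * P = (if k = l then (d k : ℂ) else 0) • P)
    (hpolar : ∀ k, F k * P = (Real.sqrt (d k) : ℂ) • (U k * P)) :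
    (∀ k l, P * (U k)ᴴ * U l * P = (if k = l then (1 : ℂ) else 0) • P) ∧
    (∀ k, (U k * P * (U k)ᴴ) * (U k * P * (U k)ᴴ) = U k * P * (U k)ᴴ) ∧
    (∀ k, (U k * P * (U k)ᴴ)ᴴ = U k * P * (U k)ᴴ) ∧
    (∀ k l, k ≠ l → (U k * P * (U k)ᴴ) * (U l * P * (U l)ᴴ) = 0) := by
  have hP : IsSelfAdjoint P := hP2
  have key := mul_star_mul_mul_eq_ite_of_polar hP hd hQEC hpolar
  refine ⟨key, fun k => ?_, fun k => hP.conjugate (U k), fun k l hkl => ?_⟩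
  · exact isIdempotentElem_mul_mul_star (by simpa using key k k)
  · exact mul_mul_star_mul_mul_mul_star_eq_zero (by simpa [hkl] using key k l)

/-- Orthogonality of the error subspaces: under the diagonal perfect QEC conditions with
polar decompositions `F_k P = √d_k • (U_k P)`, one has `P U_kᴴ U_l P = δ_{kl} • P`, and the
matrices `P_k := U_k P U_kᴴ` are mutually orthogonal projections. -/
theorem error_subspaces_orthogonal
    {n : ℕ} {K : Type*} [Fintype K] [DecidableEq K]
    (F : K → Matrix (Fin n) (Fin n) ℂ) (U : K → Matrix (Fin n) (Fin n) ℂ)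
    (P : Matrix (Fin n) (Fin n) ℂ) (d : K → ℝ)
    (hP1 : P * P = P) (hP2 : Pᴴ = P) (hP0 : P ≠ 0)
    (hd : ∀ k, 0 < d k)
    (hQEC : ∀ k l, P * (F k)ᴴ * F l * P = (if k = l then (d k : ℂ) else 0) • P)
    (hU : ∀ k, U k * (U k)ᴴ = 1 ∧ (U k)ᴴ * U k = 1)
    (hpolar : ∀ k, F k * P = (Real.sqrt (d k) : ℂ) • (U k * P)) :
    (∀ k l, P * (U k)ᴴ * U l * P = (if k = l then (1 : ℂ) else 0) • P) ∧
    (∀ k, (U k * P * (U k)ᴴ) * (U k * P * (U k)ᴴ) = U k * P * (U k)ᴴ) ∧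
    (∀ k, (U k * P * (U k)ᴴ)ᴴ = U k * P * (U k)ᴴ) ∧
    (∀ k l, k ≠ l → (U k * P * (U k)ᴴ) * (U l * P * (U l)ᴴ) = 0) :=
  error_subspaces_orthogonal_general F U P d hP2 hd hQEC hpolar
end

section
/- The transpose channel equals the standard recovery for perfect QEC codes (Lemma 2): Under the diagonal perfect QEC conditions (P F_kᴴ F_l P = (if k = l then d_k else 0) • P with d_k > 0, and F_k P = (√d_k) • (U_k P) with U_k unitary), set P_k := U_k P U_kᴴ and S := ∑_{k∈K} (d_k)^{-1/2} • P_k (which is E(P)^{-1/2} on the support of E(P) := ∑_k F_k P F_kᴴ). Then for every k ∈ K, the Kraus operator of the transpose channel satisfies P F_kᴴ S = P U_kᴴ, i.e., it coincides with the corresponding Kraus operator of the standard perfect-QEC recovery map. -/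
open Matrix

/-!
Since `F_l P = √d_l U_l P`, each projector `U_l P U_lᴴ` equals `d_l^{-1/2} F_l P U_lᴴ`, so the
`l`-th summand of `P F_kᴴ S` is `d_l⁻¹ (P F_kᴴ F_l P) U_lᴴ`. The QEC conditions make this vanish
for `l ≠ k` and equal `P U_kᴴ` for `l = k`.
-/

section PolarConditions

variable {𝕜 A : Type*} [Field 𝕜] [Ring A] [Algebra 𝕜 A]

theorem mul_mul_mul_mul_eq_smul_of_polar {P X F U V : A} {c e : 𝕜} (hc : c ≠ 0)
    (hpolar : F * P = c • (U * P)) (hcond : P * X * F * P = e • P) :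
    P * X * (U * P * V) = (c⁻¹ * e) • (P * V) := by
  have hUP : U * P = c⁻¹ • (F * P) := (eq_inv_smul_iff₀ hc).2 hpolar.symm
  calc P * X * (U * P * V)
      = c⁻¹ • ((P * X * F * P) * V) := by
        rw [hUP, smul_mul_assoc, mul_smul_comm]; noncomm_ring
    _ = (c⁻¹ * e) • (P * V) := by rw [hcond, smul_mul_assoc, smul_smul]

end PolarConditions

theorem Real.inv_sqrt_mul_inv_sqrt_mul_self {d : ℝ} (hd : 0 < d) :
    (√d)⁻¹ * ((√d)⁻¹ * d) = 1 := by
  have hsqrt : √d ≠ 0 := (Real.sqrt_pos.2 hd).ne'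
  field_simp
  exact (Real.sq_sqrt hd.le).symm

theorem transpose_channel_eq_perfect_recovery_general
    {n : ℕ} {K : Type*} [Fintype K] [DecidableEq K]
    (F : K → Matrix (Fin n) (Fin n) ℂ) (U : K → Matrix (Fin n) (Fin n) ℂ)
    (P : Matrix (Fin n) (Fin n) ℂ) (d : K → ℝ)
    (hd : ∀ k, 0 < d k)
    (hQEC : ∀ k l, P * (F k)ᴴ * F l * P = (if k = l then (d k : ℂ) else 0) • P)
    (hpolar : ∀ k, F k * P = (Real.sqrt (d k) : ℂ) • (U k * P)) :
    ∀ k, P * (F k)ᴴ *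
        (∑ l, (((Real.sqrt (d l))⁻¹ : ℝ) : ℂ) • (U l * P * (U l)ᴴ))
      = P * (U k)ᴴ := by
  intro k
  have hsummand : ∀ l, (((√(d l))⁻¹ : ℝ) : ℂ) • (P * (F k)ᴴ * (U l * P * (U l)ᴴ))
      = if k = l then P * (U k)ᴴ else 0 := by
    intro l
    have hsqrt : (√(d l) : ℂ) ≠ 0 := Complex.ofReal_ne_zero.2 (Real.sqrt_pos.2 (hd l)).ne'
    rw [mul_mul_mul_mul_eq_smul_of_polar hsqrt (hpolar l) (hQEC k l), smul_smul]
    split_ifs with hkl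
    · subst hkl
      have hcoeff := Real.inv_sqrt_mul_inv_sqrt_mul_self (hd k)
      rw [← Complex.ofReal_inj] at hcoeff
      push_cast at hcoeff ⊢
      rw [hcoeff, one_smul]
    · simp
  simp_rw [Finset.mul_sum, mul_smul_comm, hsummand]
  simp

/-- The transpose channel equals the standard recovery for perfect QEC codes (Lemma 2):
under the diagonal perfect QEC conditions, with `P_k := U_k P U_kᴴ` and
`S := ∑_k (d_k)^{-1/2} • P_k` (which is `E(P)^{-1/2}` on the support of `E(P)`),
the Kraus operators of the transpose channel satisfy `P F_kᴴ S = P U_kᴴ`. -/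
theorem transpose_channel_eq_perfect_recovery
    {n : ℕ} {K : Type*} [Fintype K] [DecidableEq K]
    (F : K → Matrix (Fin n) (Fin n) ℂ) (U : K → Matrix (Fin n) (Fin n) ℂ)
    (P : Matrix (Fin n) (Fin n) ℂ) (d : K → ℝ)
    (hP1 : P * P = P) (hP2 : Pᴴ = P) (hP0 : P ≠ 0)
    (hd : ∀ k, 0 < d k)
    (hQEC : ∀ k l, P * (F k)ᴴ * F l * P = (if k = l then (d k : ℂ) else 0) • P)
    (hU : ∀ k, U k * (U k)ᴴ = 1 ∧ (U k)ᴴ * U k = 1)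
    (hpolar : ∀ k, F k * P = (Real.sqrt (d k) : ℂ) • (U k * P)) :
    ∀ k, P * (F k)ᴴ *
        (∑ l, (((Real.sqrt (d l))⁻¹ : ℝ) : ℂ) • (U l * P * (U l)ᴴ))
      = P * (U k)ᴴ :=
  transpose_channel_eq_perfect_recovery_general F U P d hd hQEC hpolar
end

section
/- Near-optimality of the transpose channel (Theorem 3): Let {E_i}_{i∈I} be a TP Kraus family on ℂⁿ, P an orthogonal projection of rank d ≥ 1, T the positive semidefinite square root of E(P) := ∑_i E_i P E_iᴴ, and S the Moore–Penrose pseudoinverse of T. Let {R_j}_{j∈J} be a finite Kraus family with ∑_j R_jᴴ R_j = 1 and R_j = P R_j for all j, and let η ∈ [0,1] be such that ⟨ψ, (∑_{j,i} R_j E_i (ψψᴴ) E_iᴴ R_jᴴ) ψ⟩ ≥ 1 − η for every unit vector ψ with P ψ = ψ. Then for every unit vector ψ with P ψ = ψ: (⟨ψ, (∑_{j,i} R_j E_i (ψψᴴ) E_iᴴ R_jᴴ) ψ⟩)² ≤ (1 + (d−1)·η) · ∑_{i,j∈I} |⟨ψ, E_iᴴ S E_j ψ⟩|². -/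
/-!
Write `ρ = ψψᴴ`, `K = R†(ρ) = ∑ⱼ R_jᴴ ρ R_j` and `N = S E(ρ) S`. On Hermitian matrices,
`(X, Y) ↦ re tr (X T Y T)` is a positive semidefinite form, so by Cauchy–Schwarz
`re tr (K T N T)² ≤ re tr (K T K T) · re tr (N T N T)`.

Since `0 ≤ E(ρ) ≤ E(P) = T²`, the matrix `E(ρ)` lives on the support of `T`, whence `T N T = E(ρ)`
and `tr (K T N T) = tr (R†(ρ) E(ρ))` is the fidelity of `ψ` under `R ∘ E`. Using `S T S = S`,
`tr (N T N T) = tr (S E(ρ) S E(ρ))`, which expands to `∑ |⟨ψ, E_iᴴ S E_j ψ⟩|²`.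

Finally `0 ≤ K ≤ 1` gives `tr (K T K T) ≤ tr (K T²) = tr (K E(ρ)) + tr (K E(P - ρ))`. The first
term is a fidelity, at most `1`. For the second, `P - ρ` projects onto the code vectors orthogonal
to `ψ`, and for each such unit vector `v`, `⟨ψ, R(E(vvᴴ)) ψ⟩ ≤ 1 - ⟨v, R(E(vvᴴ)) v⟩ ≤ η` because
`R(E(vvᴴ))` is a density matrix; summing over the `d - 1` dimensions of `P - ρ` gives `(d - 1) η`.
-/

open Matrix
open scoped ComplexOrder MatrixOrder

namespace Matrix

variable {m ι κ 𝕜 : Type*} [Fintype m] [Fintype ι] [Fintype κ] [RCLike 𝕜]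

def krausMap (E : ι → Matrix m m 𝕜) (X : Matrix m m 𝕜) : Matrix m m 𝕜 :=
  ∑ i, E i * X * (E i)ᴴ

lemma krausMap_sub (E : ι → Matrix m m 𝕜) (X Y : Matrix m m 𝕜) :
    krausMap E (X - Y) = krausMap E X - krausMap E Y := by
  simp only [krausMap, mul_sub, sub_mul, Finset.sum_sub_distrib]

lemma krausMap_krausMap (E : ι → Matrix m m 𝕜) (R : κ → Matrix m m 𝕜) (X : Matrix m m 𝕜) :
    krausMap R (krausMap E X) = ∑ j, ∑ i, R j * E i * X * (E i)ᴴ * (R j)ᴴ := by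
  simp only [krausMap, Finset.mul_sum, Finset.sum_mul, Matrix.mul_assoc]

lemma PosSemidef.krausMap {X : Matrix m m 𝕜} (hX : X.PosSemidef) (E : ι → Matrix m m 𝕜) :
    (krausMap E X).PosSemidef :=
  posSemidef_sum _ fun i _ => hX.mul_mul_conjTranspose_same (E i)

lemma trace_krausMap [DecidableEq m] {E : ι → Matrix m m 𝕜} (hE : ∑ i, (E i)ᴴ * E i = 1)
    (X : Matrix m m 𝕜) : trace (krausMap E X) = trace X := by
  simp_rw [krausMap, trace_sum, trace_mul_cycle (E _), ← trace_sum, ← Finset.sum_mul, hE,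
    Matrix.one_mul]

lemma trace_mul_krausMap (E : ι → Matrix m m 𝕜) (X Y : Matrix m m 𝕜) :
    trace (Y * krausMap E X) = trace (krausMap (fun i => (E i)ᴴ) Y * X) := by
  simp only [krausMap, Finset.mul_sum, Finset.sum_mul, trace_sum, conjTranspose_conjTranspose]
  refine Finset.sum_congr rfl fun i _ => ?_
  rw [← Matrix.mul_assoc, ← Matrix.mul_assoc, trace_mul_comm]
  simp only [Matrix.mul_assoc]

lemma posSemidef_one_sub_krausMap_conjTranspose [DecidableEq m] {E : ι → Matrix m m 𝕜}
    (hE : ∑ i, (E i)ᴴ * E i = 1) {X : Matrix m m 𝕜} (hX : (1 - X).PosSemidef) :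
    (1 - krausMap (fun i => (E i)ᴴ) X).PosSemidef := by
  have h1 : krausMap (fun i => (E i)ᴴ) 1 = 1 := by simpa [krausMap] using hE
  rw [← h1, ← krausMap_sub]
  exact hX.krausMap _

lemma trace_eq_rank_of_isIdempotentElem {K : Type*} [Field K] [DecidableEq m] {P : Matrix m m K}
    (hP : IsIdempotentElem P) : trace P = P.rank := by
  have hP' : IsIdempotentElem (toLin' P) := hP.map toLinAlgEquiv'
  rw [← trace_toLin'_eq, (LinearMap.isProj_range_iff_isIdempotentElem _).mpr hP' |>.trace]
  rfl

lemma dotProduct_mulVec_eq_trace_mul_vecMulVec (A : Matrix m m 𝕜) (ψ : m → 𝕜) :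
    star ψ ⬝ᵥ (A *ᵥ ψ) = trace (A * vecMulVec ψ (star ψ)) := by
  rw [mul_vecMulVec, trace_vecMulVec, dotProduct_comm]

lemma dotProduct_conjTranspose_mulVec (ψ : m → 𝕜) (M : Matrix m m 𝕜) :
    star ψ ⬝ᵥ (Mᴴ *ᵥ ψ) = star (star ψ ⬝ᵥ (M *ᵥ ψ)) := by
  rw [star_dotProduct, star_mulVec, conjTranspose_conjTranspose, dotProduct_mulVec]

lemma trace_vecMulVec_mul_vecMulVec_mul (ψ : m → 𝕜) (M N : Matrix m m 𝕜) :
    trace (vecMulVec ψ (star ψ) * M * vecMulVec ψ (star ψ) * N)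
      = (star ψ ⬝ᵥ (M *ᵥ ψ)) * (star ψ ⬝ᵥ (N *ᵥ ψ)) := by
  rw [vecMulVec_mul, vecMulVec_mul_vecMulVec, vecMulVec_mul, trace_vecMulVec, smul_vecMul,
    dotProduct_smul, smul_eq_mul, ← dotProduct_mulVec, dotProduct_comm ψ, ← dotProduct_mulVec,
    mul_comm]

lemma isStarProjection_vecMulVec {ψ : m → 𝕜} (hψ : star ψ ⬝ᵥ ψ = 1) :
    IsStarProjection (vecMulVec ψ (star ψ)) where
  isIdempotentElem := by rw [IsIdempotentElem, vecMulVec_mul_vecMulVec, hψ, one_smul]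
  isSelfAdjoint := (posSemidef_vecMulVec_self_star ψ).isHermitian

lemma IsStarProjection.sub_vecMulVec {P : Matrix m m 𝕜} (hP : IsStarProjection P) {ψ : m → 𝕜}
    (hψ : star ψ ⬝ᵥ ψ = 1) (hPψ : P *ᵥ ψ = ψ) : IsStarProjection (P - vecMulVec ψ (star ψ)) :=
  (isStarProjection_vecMulVec hψ).sub_of_mul_eq_right hP (by rw [mul_vecMulVec, hPψ])

lemma PosSemidef.trace_mul_nonneg [DecidableEq m] {A B : Matrix m m 𝕜} (hA : A.PosSemidef)
    (hB : B.PosSemidef) : 0 ≤ trace (A * B) := by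
  open scoped Matrix.Norms.L2Operator in
  obtain ⟨C, rfl⟩ := CStarAlgebra.nonneg_iff_eq_star_mul_self.mp hA.nonneg
  rw [star_eq_conjTranspose, Matrix.mul_assoc, trace_mul_comm]
  exact (hB.mul_mul_conjTranspose_same C).trace_nonneg

lemma PosSemidef.mul_eq_zero_of_posSemidef_sub {G H Q : Matrix m m 𝕜} (hG : G.PosSemidef)
    (hHG : (H - G).PosSemidef) (hQH : Q * H = 0) : Q * G = 0 := by
  suffices G * Qᴴ = 0 by
    simpa [hG.isHermitian.eq] using congrArg (·ᴴ) this
  refine ext_iff_mulVec.mpr fun x => ?_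
  rw [zero_mulVec, ← mulVec_mulVec, ← hG.dotProduct_mulVec_zero_iff]
  have hH : star (Qᴴ *ᵥ x) ⬝ᵥ (H *ᵥ (Qᴴ *ᵥ x)) = 0 := by
    rw [star_mulVec, conjTranspose_conjTranspose, ← dotProduct_mulVec, mulVec_mulVec, hQH,
      zero_mulVec, dotProduct_zero]
  have h := hHG.dotProduct_mulVec_nonneg (Qᴴ *ᵥ x)
  rw [sub_mulVec, dotProduct_sub, hH, zero_sub, neg_nonneg] at h
  exact le_antisymm h (hG.dotProduct_mulVec_nonneg _)

section PseudoInverse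

variable {T S : Matrix m m 𝕜}

lemma isStarProjection_mul_of_pinv (hT : T.IsHermitian) (hS : S.IsHermitian)
    (hSTS : S * T * S = S) (hcomm : S * T = T * S) : IsStarProjection (T * S) where
  isIdempotentElem := by rw [IsIdempotentElem, Matrix.mul_assoc, ← Matrix.mul_assoc S, hSTS]
  isSelfAdjoint := by
    rw [IsSelfAdjoint, star_eq_conjTranspose, conjTranspose_mul, hT.eq, hS.eq, hcomm]

lemma mul_mul_mul_eq_self_of_posSemidef_sub_mul_self [DecidableEq m] (hT : T.IsHermitian)
    (hS : S.IsHermitian) (hSTS : S * T * S = S) (hTST : T * S * T = T) (hcomm : S * T = T * S)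
    {G : Matrix m m 𝕜} (hG : G.PosSemidef) (hTG : (T * T - G).PosSemidef) :
    T * (S * G * S) * T = G := by
  have hPG : (1 - T * S) * G = 0 := hG.mul_eq_zero_of_posSemidef_sub hTG <| by
    rw [sub_mul, Matrix.one_mul, ← Matrix.mul_assoc, hTST, sub_self]
  rw [sub_mul, Matrix.one_mul, sub_eq_zero, eq_comm] at hPG
  have hGP : G * (T * S) = G := by
    have hP : (T * S)ᴴ = T * S := (isStarProjection_mul_of_pinv hT hS hSTS hcomm).isSelfAdjoint
    have h := congrArg (·ᴴ) hPG
    rwa [conjTranspose_mul, hP, hG.isHermitian.eq] at h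
  calc T * (S * G * S) * T = T * S * G * (S * T) := by simp only [Matrix.mul_assoc]
    _ = G := by rw [hcomm, hPG, hGP]

lemma trace_mul_mul_mul_mul_of_pinv (hSTS : S * T * S = S) (G : Matrix m m 𝕜) :
    trace (S * G * S * T * (S * G * S) * T) = trace (S * G * S * G) := by
  calc trace (S * G * S * T * (S * G * S) * T) = trace (S * G * (S * T * S) * G * (S * T)) := by
        simp only [Matrix.mul_assoc]
    _ = trace (S * G * S * G) := by
        rw [hSTS, trace_mul_comm]
        simp only [← Matrix.mul_assoc, hSTS]

end PseudoInverse

lemma PosSemidef.re_trace_mul_le [DecidableEq m] {A Q : Matrix m m ℂ} (hA : A.PosSemidef)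
    (hQ : IsStarProjection Q) : (trace (A * Q)).re ≤ (trace A).re := by
  have h := hA.trace_mul_nonneg hQ.one_sub_nonneg.posSemidef
  rw [mul_sub, Matrix.mul_one, trace_sub, sub_nonneg] at h
  exact (Complex.le_def.mp h).1

lemma PosSemidef.re_dotProduct_add_le [DecidableEq m] {A : Matrix m m ℂ} (hA : A.PosSemidef)
    {u v : m → ℂ} (hu : star u ⬝ᵥ u = 1) (hv : star v ⬝ᵥ v = 1) (huv : star u ⬝ᵥ v = 0) :
    (star u ⬝ᵥ (A *ᵥ u)).re + (star v ⬝ᵥ (A *ᵥ v)).re ≤ (trace A).re := by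
  have hQ := (isStarProjection_vecMulVec hu).add (isStarProjection_vecMulVec hv)
    (by rw [vecMulVec_mul_vecMulVec, huv, zero_smul, vecMulVec_zero])
  simpa only [dotProduct_mulVec_eq_trace_mul_vecMulVec, mul_add, trace_add, Complex.add_re]
    using hA.re_trace_mul_le hQ

lemma PosSemidef.re_trace_mul_mul_mul_mul_le [DecidableEq m] {K T : Matrix m m ℂ}
    (hK : K.PosSemidef) (hK1 : (1 - K).PosSemidef) (hT : T.IsHermitian) :
    (trace (K * T * K * T)).re ≤ (trace (K * (T * T))).re := by
  have h := (hK.mul_mul_conjTranspose_same T).trace_mul_nonneg hK1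
  have e : trace (T * K * T * (1 - K)) = trace (K * (T * T)) - trace (K * T * K * T) := by
    rw [mul_sub, Matrix.mul_one, trace_sub, trace_mul_cycle T K T, trace_mul_comm (T * T),
      trace_mul_comm (T * K * T)]
    simp only [Matrix.mul_assoc]
  rw [hT.eq, e, sub_nonneg] at h
  exact (Complex.le_def.mp h).1

lemma sq_re_trace_mul_mul_mul_mul_le [DecidableEq m] {T X Y : Matrix m m ℂ}
    (hT : T.PosSemidef) (hX : X.IsHermitian) (hY : Y.IsHermitian) :
    (trace (X * T * Y * T)).re ^ 2 ≤ (trace (X * T * X * T)).re * (trace (Y * T * Y * T)).re := by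
  have hswap : trace (Y * T * X * T) = trace (X * T * Y * T) := by
    rw [Matrix.mul_assoc, trace_mul_comm, Matrix.mul_assoc, Matrix.mul_assoc, Matrix.mul_assoc]
  have hquad : ∀ t : ℝ, 0 ≤ (trace (Y * T * Y * T)).re * (t * t)
      + 2 * (trace (X * T * Y * T)).re * t + (trace (X * T * X * T)).re := by
    intro t
    have hZ : (X + (t : ℂ) • Y)ᴴ = X + (t : ℂ) • Y := by
      simp [conjTranspose_add, conjTranspose_smul, hX.eq, hY.eq]
    have h := ((hT.conjTranspose_mul_mul_same (X + (t : ℂ) • Y)).trace_mul_nonneg hT).1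
    rw [hZ] at h
    simp only [add_mul, mul_add, smul_mul_assoc, mul_smul_comm, trace_add, trace_smul,
      hswap, smul_eq_mul, Complex.add_re, Complex.re_ofReal_mul, Complex.zero_re] at h
    linarith
  have hdiscr := discrim_le_zero hquad
  rw [discrim] at hdiscr
  nlinarith

lemma re_trace_mul_krausMap_vecMulVec_mul_krausMap_vecMulVec {B : Matrix m m ℂ}
    (hB : B.IsHermitian) (E : ι → Matrix m m ℂ) (ψ : m → ℂ) :
    (trace (B * krausMap E (vecMulVec ψ (star ψ)) * B * krausMap E (vecMulVec ψ (star ψ)))).re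
      = ∑ i, ∑ j, ‖star ψ ⬝ᵥ (((E i)ᴴ * B * E j) *ᵥ ψ)‖ ^ 2 := by
  set ρ := vecMulVec ψ (star ψ)
  simp only [krausMap, Finset.mul_sum, Finset.sum_mul, trace_sum, Complex.re_sum]
  rw [Finset.sum_comm]
  refine Finset.sum_congr rfl fun i _ => Finset.sum_congr rfl fun j _ => ?_
  have hcyc : trace (B * (E i * ρ * (E i)ᴴ) * B * (E j * ρ * (E j)ᴴ))
      = trace (ρ * ((E i)ᴴ * B * E j) * ρ * ((E i)ᴴ * B * E j)ᴴ) := by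
    rw [conjTranspose_mul, conjTranspose_mul, hB.eq, conjTranspose_conjTranspose]
    calc _ = trace ((B * E i) * (ρ * ((E i)ᴴ * B * E j) * ρ * (E j)ᴴ)) := by
          simp only [Matrix.mul_assoc]
      _ = _ := by
          rw [trace_mul_comm]
          simp only [Matrix.mul_assoc]
  rw [hcyc, trace_vecMulVec_mul_vecMulVec_mul, dotProduct_conjTranspose_mulVec, Complex.star_def,
    Complex.mul_conj, Complex.ofReal_re, Complex.normSq_eq_norm_sq]

lemma re_dotProduct_mulVec_le_of_forall_unit {W Q : Matrix m m ℂ} {η : ℝ}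
    (h : ∀ v, star v ⬝ᵥ v = 1 → Q *ᵥ v = v → (star v ⬝ᵥ (W *ᵥ v)).re ≤ η)
    {y : m → ℂ} (hy : Q *ᵥ y = y) : (star y ⬝ᵥ (W *ᵥ y)).re ≤ η * (star y ⬝ᵥ y).re := by
  rcases eq_or_ne y 0 with rfl | hy0
  · simp
  set c : ℝ := (star y ⬝ᵥ y).re
  have hyy : star y ⬝ᵥ y = c := Complex.eq_re_of_ofReal_le (dotProduct_star_self_nonneg y)
  have hc : 0 < c := by simpa [hyy] using dotProduct_star_self_pos_iff.mpr hy0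
  set r : ℝ := (Real.sqrt c)⁻¹
  have hr : r * r = c⁻¹ := by rw [← mul_inv, Real.mul_self_sqrt hc.le]
  have hunit : star (r • y) ⬝ᵥ (r • y) = 1 := by
    rw [star_smul, star_trivial, smul_dotProduct, dotProduct_smul, hyy, smul_smul, hr,
      Complex.real_smul, ← Complex.ofReal_mul, inv_mul_cancel₀ hc.ne', Complex.ofReal_one]
  have hu := h (r • y) hunit (by rw [mulVec_smul, hy])
  rw [star_smul, star_trivial, mulVec_smul, smul_dotProduct, dotProduct_smul, smul_smul, hr,
    Complex.smul_re, smul_eq_mul, inv_mul_le_iff₀ hc] at hu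
  linarith

lemma re_trace_mul_le_of_forall_unit [DecidableEq m] {W Q : Matrix m m ℂ} {η : ℝ}
    (hW : W.IsHermitian) (hQ : IsStarProjection Q)
    (h : ∀ v, star v ⬝ᵥ v = 1 → Q *ᵥ v = v → (star v ⬝ᵥ (W *ᵥ v)).re ≤ η) :
    (trace (W * Q)).re ≤ η * (trace Q).re := by
  have hQh : Qᴴ = Q := hQ.isSelfAdjoint
  have hQQ : Q * Q = Q := hQ.isIdempotentElem
  have hxQ : ∀ x z, star x ⬝ᵥ (Q *ᵥ z) = star (Q *ᵥ x) ⬝ᵥ z := fun x z => by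
    rw [dotProduct_mulVec, star_mulVec, hQh]
  have hM : (η • (Q * Q) - Q * W * Q).IsHermitian := by
    simp only [IsHermitian, conjTranspose_sub, conjTranspose_smul, conjTranspose_mul, hQh, hW.eq,
      star_trivial, Matrix.mul_assoc]
  have hpsd : (η • (Q * Q) - Q * W * Q).PosSemidef := by
    refine .of_dotProduct_mulVec_nonneg hM fun x =>
      RCLike.nonneg_iff.mpr ⟨?_, hM.im_star_dotProduct_mulVec_self x⟩
    have hx := re_dotProduct_mulVec_le_of_forall_unit h
      (show Q *ᵥ (Q *ᵥ x) = Q *ᵥ x by rw [mulVec_mulVec, hQQ])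
    rw [sub_mulVec, smul_mulVec, ← mulVec_mulVec, ← mulVec_mulVec, ← mulVec_mulVec,
      dotProduct_sub, dotProduct_smul, hxQ x (Q *ᵥ x), hxQ x (W *ᵥ (Q *ᵥ x))]
    simp only [RCLike.re_to_complex, Complex.sub_re, Complex.smul_re, smul_eq_mul]
    linarith
  have htr := hpsd.trace_nonneg
  rw [hQQ, trace_sub, trace_smul, Matrix.mul_assoc, trace_mul_comm, Matrix.mul_assoc, hQQ,
    sub_nonneg] at htr
  simpa [Complex.smul_re] using (Complex.le_def.mp htr).1

section Recovery

variable [DecidableEq m] {E : ι → Matrix m m ℂ} {R : κ → Matrix m m ℂ}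
  (hE : ∑ i, (E i)ᴴ * E i = 1) (hR : ∑ j, (R j)ᴴ * R j = 1)
include hE hR

lemma re_dotProduct_krausMap_conjTranspose_krausMap_conjTranspose_le {ψ v : m → ℂ} {η : ℝ}
    (hψ : star ψ ⬝ᵥ ψ = 1) (hv : star v ⬝ᵥ v = 1) (hψv : star ψ ⬝ᵥ v = 0)
    (hfid : 1 - η ≤ (star v ⬝ᵥ (krausMap R (krausMap E (vecMulVec v (star v))) *ᵥ v)).re) :
    (star v ⬝ᵥ (krausMap (fun i => (E i)ᴴ) (krausMap (fun j => (R j)ᴴ) (vecMulVec ψ (star ψ)))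
      *ᵥ v)).re ≤ η := by
  have h := ((posSemidef_vecMulVec_self_star v).krausMap E |>.krausMap R).re_dotProduct_add_le
    hψ hv hψv
  rw [trace_krausMap hR, trace_krausMap hE, trace_vecMulVec, dotProduct_comm v, hv,
    Complex.one_re] at h
  rw [dotProduct_mulVec_eq_trace_mul_vecMulVec, ← trace_mul_krausMap, ← trace_mul_krausMap,
    trace_mul_comm, ← dotProduct_mulVec_eq_trace_mul_vecMulVec]
  linarith

lemma re_trace_krausMap_conjTranspose_mul_krausMap_le {P : Matrix m m ℂ}
    (hP : IsStarProjection P) {η : ℝ} (hfid : ∀ v, star v ⬝ᵥ v = 1 → P *ᵥ v = v →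
      1 - η ≤ (star v ⬝ᵥ (krausMap R (krausMap E (vecMulVec v (star v))) *ᵥ v)).re)
    {ψ : m → ℂ} (hψ : star ψ ⬝ᵥ ψ = 1) (hPψ : P *ᵥ ψ = ψ) :
    (trace (krausMap (fun j => (R j)ᴴ) (vecMulVec ψ (star ψ)) * krausMap E P)).re
      ≤ 1 + ((P.rank : ℝ) - 1) * η := by
  set ρ := vecMulVec ψ (star ψ)
  set K := krausMap (fun j => (R j)ᴴ) ρ
  have hρ := isStarProjection_vecMulVec hψ
  have hρpsd : ρ.PosSemidef := posSemidef_vecMulVec_self_star ψ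
  have hQ := hP.sub_vecMulVec hψ hPψ
  have htrρ : trace ρ = 1 := by rw [trace_vecMulVec, dotProduct_comm, hψ]
  have hsplit : krausMap E P = krausMap E ρ + krausMap E (P - ρ) := by
    rw [krausMap_sub]
    abel
  have hfidψ : (trace (K * krausMap E ρ)).re ≤ 1 := by
    rw [← trace_mul_krausMap, trace_mul_comm]
    refine (((hρpsd.krausMap E).krausMap R).re_trace_mul_le hρ).trans ?_
    rw [trace_krausMap hR, trace_krausMap hE, htrρ, Complex.one_re]
  have hrest : (trace (K * krausMap E (P - ρ))).re ≤ η * ((P.rank : ℝ) - 1) := by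
    have htr : (trace (P - ρ)).re = P.rank - 1 := by
      rw [trace_sub, trace_eq_rank_of_isIdempotentElem hP.isIdempotentElem, htrρ]
      simp
    have hQψ : (P - ρ) *ᵥ ψ = 0 := by
      rw [sub_mulVec, hPψ, vecMulVec_mulVec, hψ]
      simp
    rw [trace_mul_krausMap, ← htr]
    refine re_trace_mul_le_of_forall_unit ((hρpsd.krausMap _).krausMap _).isHermitian hQ
      fun v hv hQv => ?_
    have hPv : P *ᵥ v = v := by
      rw [← hQv, mulVec_mulVec, mul_sub, hP.isIdempotentElem.eq, mul_vecMulVec, hPψ]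
    have hψv : star ψ ⬝ᵥ v = 0 := by
      have hQh : (P - ρ)ᴴ = P - ρ := hQ.isSelfAdjoint
      rw [← hQv, dotProduct_mulVec, ← hQh, ← star_mulVec, hQψ, star_zero, zero_dotProduct]
    exact re_dotProduct_krausMap_conjTranspose_krausMap_conjTranspose_le hE hR hψ hv hψv
      (hfid v hv hPv)
  rw [hsplit, mul_add, trace_add, Complex.add_re]
  linarith

end Recovery

end Matrix

theorem transpose_channel_near_optimal_general
    {n : ℕ} {I J : Type*} [Fintype I] [Fintype J]
    (E : I → Matrix (Fin n) (Fin n) ℂ) (R : J → Matrix (Fin n) (Fin n) ℂ)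
    (P T S : Matrix (Fin n) (Fin n) ℂ) (d : ℕ) (η : ℝ)
    (hP1 : P * P = P) (hP2 : Pᴴ = P) (hrank : P.rank = d)
    (hTP : ∑ i, (E i)ᴴ * E i = 1)
    (hT : T.PosSemidef) (hTsq : T * T = ∑ i, E i * P * (E i)ᴴ)
    (hS : S.PosSemidef) (hSTS : S * T * S = S) (hTST : T * S * T = T)
    (hcomm : S * T = T * S)
    (hRTP : ∑ j, (R j)ᴴ * R j = 1)
    (hηfid : ∀ ψ : Fin n → ℂ, star ψ ⬝ᵥ ψ = 1 → P *ᵥ ψ = ψ →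
      1 - η ≤ (star ψ ⬝ᵥ ((∑ j, ∑ i,
        R j * E i * vecMulVec ψ (star ψ) * (E i)ᴴ * (R j)ᴴ) *ᵥ ψ)).re) :
    ∀ ψ : Fin n → ℂ, star ψ ⬝ᵥ ψ = 1 → P *ᵥ ψ = ψ →
      ((star ψ ⬝ᵥ ((∑ j, ∑ i,
          R j * E i * vecMulVec ψ (star ψ) * (E i)ᴴ * (R j)ᴴ) *ᵥ ψ)).re) ^ 2
        ≤ (1 + ((d : ℝ) - 1) * η) *
          ∑ i, ∑ j, ‖star ψ ⬝ᵥ (((E i)ᴴ * S * E j) *ᵥ ψ)‖ ^ 2 := by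
  intro ψ hψ hPψ
  simp_rw [← krausMap_krausMap] at hηfid ⊢
  have hP : IsStarProjection P := ⟨hP1, hP2⟩
  have hTE : T * T = krausMap E P := hTsq
  set ρ := vecMulVec ψ (star ψ)
  set G := krausMap E ρ
  set K := krausMap (fun j => (R j)ᴴ) ρ
  set N := S * G * S
  have hρ : ρ.PosSemidef := posSemidef_vecMulVec_self_star ψ
  have hG : G.PosSemidef := hρ.krausMap E
  have hK : K.PosSemidef := hρ.krausMap _
  have hN : N.PosSemidef := by simpa [hS.isHermitian.eq] using hG.mul_mul_conjTranspose_same S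
  have hTNT : T * N * T = G :=
    mul_mul_mul_eq_self_of_posSemidef_sub_mul_self hT.isHermitian hS.isHermitian hSTS hTST hcomm
      hG (by rw [hTE, ← krausMap_sub]; exact (hP.sub_vecMulVec hψ hPψ).nonneg.posSemidef.krausMap E)
  have hfid : star ψ ⬝ᵥ (krausMap R G *ᵥ ψ) = trace (K * T * N * T) := by
    rw [dotProduct_mulVec_eq_trace_mul_vecMulVec, trace_mul_comm, trace_mul_krausMap,
      show K * T * N * T = K * (T * N * T) by simp only [Matrix.mul_assoc], hTNT]
  have hKT : (trace (K * T * K * T)).re ≤ 1 + ((d : ℝ) - 1) * η := by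
    refine (hK.re_trace_mul_mul_mul_mul_le (posSemidef_one_sub_krausMap_conjTranspose hRTP
      (isStarProjection_vecMulVec hψ).one_sub_nonneg.posSemidef) hT.isHermitian).trans ?_
    rw [hTE, ← hrank]
    exact re_trace_krausMap_conjTranspose_mul_krausMap_le hTP hRTP hP hηfid hψ hPψ
  have hNT : (trace (N * T * N * T)).re
      = ∑ i, ∑ j, ‖star ψ ⬝ᵥ (((E i)ᴴ * S * E j) *ᵥ ψ)‖ ^ 2 := by
    rw [trace_mul_mul_mul_mul_of_pinv hSTS,
      re_trace_mul_krausMap_vecMulVec_mul_krausMap_vecMulVec hS.isHermitian]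
  rw [hfid, ← hNT]
  calc _ ≤ (trace (K * T * K * T)).re * (trace (N * T * N * T)).re :=
        sq_re_trace_mul_mul_mul_mul_le hT hK.isHermitian hN.isHermitian
    _ ≤ _ := mul_le_mul_of_nonneg_right hKT (hNT ▸ by positivity)

/-- Near-optimality of the transpose channel (Theorem 3): if a trace-preserving recovery
`{R_j}` supported on the code achieves fidelity loss at most `η` on all pure code states,
then for every pure code state `ψ`, the square of its fidelity under `R ∘ E` is bounded by
`(1 + (d-1)η)` times the squared fidelity of `ψ` under the transpose channel composed
with `E`. Here `T = sqrt(E(P))` and `S` is its Moore–Penrose pseudoinverse. -/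
theorem transpose_channel_near_optimal
    {n : ℕ} {I J : Type*} [Fintype I] [Fintype J]
    (E : I → Matrix (Fin n) (Fin n) ℂ) (R : J → Matrix (Fin n) (Fin n) ℂ)
    (P T S : Matrix (Fin n) (Fin n) ℂ) (d : ℕ) (η : ℝ)
    (hP1 : P * P = P) (hP2 : Pᴴ = P) (hrank : P.rank = d) (hd : 1 ≤ d)
    (hTP : ∑ i, (E i)ᴴ * E i = 1)
    (hT : T.PosSemidef) (hTsq : T * T = ∑ i, E i * P * (E i)ᴴ)
    (hS : S.PosSemidef) (hSTS : S * T * S = S) (hTST : T * S * T = T)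
    (hcomm : S * T = T * S)
    (hRTP : ∑ j, (R j)ᴴ * R j = 1) (hRP : ∀ j, R j = P * R j)
    (hη0 : 0 ≤ η) (hη1 : η ≤ 1)
    (hηfid : ∀ ψ : Fin n → ℂ, star ψ ⬝ᵥ ψ = 1 → P *ᵥ ψ = ψ →
      1 - η ≤ (star ψ ⬝ᵥ ((∑ j, ∑ i,
        R j * E i * vecMulVec ψ (star ψ) * (E i)ᴴ * (R j)ᴴ) *ᵥ ψ)).re) :
    ∀ ψ : Fin n → ℂ, star ψ ⬝ᵥ ψ = 1 → P *ᵥ ψ = ψ →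
      ((star ψ ⬝ᵥ ((∑ j, ∑ i,
          R j * E i * vecMulVec ψ (star ψ) * (E i)ᴴ * (R j)ᴴ) *ᵥ ψ)).re) ^ 2
        ≤ (1 + ((d : ℝ) - 1) * η) *
          ∑ i, ∑ j, ‖star ψ ⬝ᵥ (((E i)ᴴ * S * E j) *ᵥ ψ)‖ ^ 2 :=
  transpose_channel_near_optimal_general E R P T S d η hP1 hP2 hrank hTP hT hTsq hS hSTS hTST hcomm
    hRTP hηfid
end

section
/- Example channel, transpose-channel fidelity loss (Example 5): Fix d ≥ 2 and p ∈ [0,1). On ℂ^d consider the TP Kraus family E_0 := √(1−p) • 1 and E_k := √p • (e_0 e_{k−1}ᴴ) for k = 1, …, d. Here E(1) = (1−p) • 1 + (p·d) • (e_0 e_0ᴴ) is positive definite, and S := (sqrt(E(1)))⁻¹ is its inverse square root. Then the squared fidelity of the basis state e_0 under the transpose channel composed with the noise satisfies ∑_{i,j} |⟨e_0, E_iᴴ S E_j e_0⟩|² = 1 / (1 + (d−1)·p); consequently the transpose-channel fidelity loss satisfies η_P ≥ (d−1)·p / (1 + (d−1)·p). -/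
/-!
Both `E(1)` and its positive square root `T` have the form `a • 1 + b • |e₀⟩⟨e₀|`; this family is
closed under products and inverses, so uniqueness of positive square roots identifies `T`, and
`e₀` is an eigenvector of `S = T⁻¹` with eigenvalue `(1 + (d - 1) p)^{-1/2}`. Every Kraus
operator also has `e₀` as an eigenvector, `E_j e₀ = w_j e₀` with `∑ |w_j|² = 1`, so the fidelity
sum factors as `(∑ |w_j|²)² |⟨e₀, S e₀⟩|² = 1 / (1 + (d - 1) p)`. Evaluating the infimum at `e₀`
bounds the fidelity loss.
-/

open Matrix
open scoped ComplexOrder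

section IdAddSingle

variable {n R : Type*} [DecidableEq n]

def idAddSingle [Semiring R] (z : n) (a b : R) : Matrix n n R :=
  a • 1 + b • single z z 1

theorem idAddSingle_mul_idAddSingle [Fintype n] [CommSemiring R] (z : n) (x y u v : R) :
    idAddSingle z x y * idAddSingle z u v = idAddSingle z (x * u) (x * v + y * u + y * v) := by
  simp only [idAddSingle, add_mul, mul_add, Matrix.smul_mul, Matrix.mul_smul, Matrix.one_mul,
    single_mul_single_same, mul_one, smul_smul, add_smul]
  module

theorem idAddSingle_mulVec_single [Fintype n] [CommSemiring R] (z : n) (a b : R) :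
    idAddSingle z a b *ᵥ Pi.single z 1 = (a + b) • Pi.single z 1 := by
  rw [idAddSingle, add_mulVec, smul_mulVec, smul_mulVec, one_mulVec, single_mulVec, add_smul,
    Pi.single_eq_same, one_mul]
  rfl

theorem inv_idAddSingle [Fintype n] [Field R] (z : n) {a b : R} (ha : a ≠ 0) (hab : a + b ≠ 0) :
    (idAddSingle z a b)⁻¹ = idAddSingle z a⁻¹ ((a + b)⁻¹ - a⁻¹) := by
  refine inv_eq_right_inv ?_
  rw [idAddSingle_mul_idAddSingle, mul_inv_cancel₀ ha,
    show a * ((a + b)⁻¹ - a⁻¹) + b * a⁻¹ + b * ((a + b)⁻¹ - a⁻¹) = 0 by field_simp; ring]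
  simp [idAddSingle]

theorem inv_idAddSingle_mulVec_single [Fintype n] [Field R] (z : n) {a b : R} (ha : a ≠ 0)
    (hab : a + b ≠ 0) :
    (idAddSingle z a b)⁻¹ *ᵥ Pi.single z 1 = (a + b)⁻¹ • Pi.single z 1 := by
  rw [inv_idAddSingle z ha hab, idAddSingle_mulVec_single, add_sub_cancel]

theorem dotProduct_idAddSingle_mulVec [Fintype n] [CommSemiring R] [StarRing R] (z : n) (a b : R)
    (x : n → R) :
    star x ⬝ᵥ (idAddSingle z a b *ᵥ x) = a * (star x ⬝ᵥ x) + b * (star (x z) * x z) := by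
  rw [idAddSingle, add_mulVec, smul_mulVec, smul_mulVec, single_mulVec, one_mulVec,
    dotProduct_add, dotProduct_smul, dotProduct_smul]
  simp [dotProduct, Function.update_apply, mul_comm]

theorem isHermitian_idAddSingle (z : n) (a b : ℝ) :
    (idAddSingle z (a : ℂ) (b : ℂ)).IsHermitian := by
  simp [IsHermitian, idAddSingle, conjTranspose_smul, conjTranspose_single]

theorem posSemidef_idAddSingle [Fintype n] (z : n) {a b : ℝ} (ha : 0 ≤ a) (hb : 0 ≤ b) :
    (idAddSingle z (a : ℂ) (b : ℂ)).PosSemidef := by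
  refine PosSemidef.of_dotProduct_mulVec_nonneg (isHermitian_idAddSingle z a b) fun x => ?_
  rw [dotProduct_idAddSingle_mulVec]
  exact add_nonneg (mul_nonneg (by exact_mod_cast ha) (dotProduct_star_self_nonneg x))
    (mul_nonneg (by exact_mod_cast hb) (star_mul_self_nonneg _))

theorem posDef_idAddSingle [Fintype n] (z : n) {a b : ℝ} (ha : 0 < a) (hb : 0 ≤ b) :
    (idAddSingle z (a : ℂ) (b : ℂ)).PosDef := by
  refine PosDef.of_dotProduct_mulVec_pos (isHermitian_idAddSingle z a b) fun x hx => ?_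
  rw [dotProduct_idAddSingle_mulVec]
  exact add_pos_of_pos_of_nonneg
    (mul_pos (by exact_mod_cast ha) (dotProduct_star_self_pos_iff.mpr hx))
    (mul_nonneg (by exact_mod_cast hb) (star_mul_self_nonneg _))

theorem eq_idAddSingle_of_mul_self_eq [Fintype n] (z : n) {T : Matrix n n ℂ} (hT : T.PosSemidef)
    {a c : ℝ} (ha : 0 ≤ a) (hac : a ≤ c)
    (hTT : T * T = idAddSingle z ((a ^ 2 : ℝ) : ℂ) ((c ^ 2 - a ^ 2 : ℝ) : ℂ)) :
    T = idAddSingle z (a : ℂ) ((c - a : ℝ) : ℂ) := by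
  open scoped MatrixOrder in
  refine (CFC.sq_eq_sq_iff T _ hT.nonneg
    (posSemidef_idAddSingle z ha (sub_nonneg.2 hac)).nonneg).1 ?_
  rw [sq, sq, hTT, idAddSingle_mul_idAddSingle]
  congr 1 <;> push_cast <;> ring

theorem inv_sqrt_mulVec_single [Fintype n] (z : n) {T : Matrix n n ℂ} (hT : T.PosSemidef)
    {α β : ℝ} (hα : 0 < α) (hβ : 0 ≤ β)
    (hTT : T * T = idAddSingle z (α : ℂ) (β : ℂ)) :
    T⁻¹ *ᵥ Pi.single z 1 = (((√(α + β))⁻¹ : ℝ) : ℂ) • Pi.single z 1 := by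
  have hsqrt : √α ≤ √(α + β) := Real.sqrt_le_sqrt (by linarith)
  rw [eq_idAddSingle_of_mul_self_eq z hT (Real.sqrt_nonneg α) hsqrt (by
    rw [hTT, Real.sq_sqrt hα.le, Real.sq_sqrt (by linarith), add_sub_cancel_left])]
  have hα' : (√α : ℂ) ≠ 0 := by exact_mod_cast (Real.sqrt_pos.2 hα).ne'
  have hαβ' : (√(α + β) : ℂ) ≠ 0 := by exact_mod_cast (Real.sqrt_pos.2 (by linarith)).ne'
  rw [inv_idAddSingle_mulVec_single z hα' (by push_cast; rwa [add_sub_cancel])]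
  push_cast
  rw [add_sub_cancel]

end IdAddSingle

section TransposeFidelity

variable {ι n : Type*} [Fintype ι] [Fintype n]

noncomputable def transposeFidelitySq (E : ι → Matrix n n ℂ) (S : Matrix n n ℂ) (ψ : n → ℂ) : ℝ :=
  ∑ i, ∑ j, ‖star ψ ⬝ᵥ (((E i)ᴴ * S * E j) *ᵥ ψ)‖ ^ 2

theorem dotProduct_conjTranspose_mul_mul_mulVec {A S B : Matrix n n ℂ} {v : n → ℂ} {a b : ℂ}
    (hA : A *ᵥ v = a • v) (hB : B *ᵥ v = b • v) :
    star v ⬝ᵥ ((Aᴴ * S * B) *ᵥ v) = star a * b * (star v ⬝ᵥ (S *ᵥ v)) := by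
  rw [← mulVec_mulVec, ← mulVec_mulVec, hB, dotProduct_mulVec, ← star_mulVec, hA, mulVec_smul,
    dotProduct_smul, star_smul, smul_dotProduct, smul_eq_mul, smul_eq_mul, mul_left_comm,
    mul_assoc]

theorem transposeFidelitySq_of_mulVec_eq_smul {E : ι → Matrix n n ℂ} (S : Matrix n n ℂ)
    {v : n → ℂ} {w : ι → ℂ} (hw : ∀ i, E i *ᵥ v = w i • v) :
    transposeFidelitySq E S v = (∑ i, ‖w i‖ ^ 2) ^ 2 * ‖star v ⬝ᵥ (S *ᵥ v)‖ ^ 2 := by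
  simp only [transposeFidelitySq, dotProduct_conjTranspose_mul_mul_mulVec (hw _) (hw _),
    norm_mul, norm_star, mul_pow, ← Finset.sum_mul, ← Finset.mul_sum, sq (∑ i, ‖w i‖ ^ 2)]

theorem sInf_transposeFidelitySq_le (E : ι → Matrix n n ℂ) (S : Matrix n n ℂ) {ψ : n → ℂ}
    (hψ : star ψ ⬝ᵥ ψ = 1) :
    sInf {r : ℝ | ∃ ψ : n → ℂ, star ψ ⬝ᵥ ψ = 1 ∧ r = transposeFidelitySq E S ψ}
      ≤ transposeFidelitySq E S ψ :=
  csInf_le ⟨0, by rintro r ⟨φ, -, rfl⟩; unfold transposeFidelitySq; positivity⟩ ⟨ψ, hψ, rfl⟩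

end TransposeFidelity

section ExampleChannel

variable {d : ℕ} {p : ℝ} {z : Fin d} {E : Fin (d + 1) → Matrix (Fin d) (Fin d) ℂ}

theorem kraus_sum_mul_conjTranspose (hp0 : 0 ≤ p) (hp1 : p ≤ 1)
    (hE0 : E 0 = (√(1 - p) : ℂ) • (1 : Matrix (Fin d) (Fin d) ℂ))
    (hEk : ∀ k : Fin d, E k.succ = (√p : ℂ) • single z k 1) :
    ∑ k, E k * 1 * (E k)ᴴ = idAddSingle z ((1 - p : ℝ) : ℂ) ((p * d : ℝ) : ℂ) := by
  have hsq : ∀ {x : ℝ}, 0 ≤ x → star (√x : ℂ) * √x = x := fun hx => by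
    rw [Complex.star_def, Complex.conj_ofReal, ← Complex.ofReal_mul, Real.mul_self_sqrt hx]
  simp only [Fin.sum_univ_succ, hE0, hEk, conjTranspose_smul, conjTranspose_one,
    conjTranspose_single, star_one, Matrix.smul_mul, Matrix.mul_smul, single_mul_single_same,
    mul_one, smul_smul, Finset.sum_const, Finset.card_univ, Fintype.card_fin,
    ← Nat.cast_smul_eq_nsmul ℂ, hsq hp0, hsq (sub_nonneg.2 hp1)]
  simp only [idAddSingle]
  push_cast
  ring_nf

theorem exists_kraus_mulVec_single_eq_smul (hp0 : 0 ≤ p) (hp1 : p ≤ 1)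
    (hE0 : E 0 = (√(1 - p) : ℂ) • (1 : Matrix (Fin d) (Fin d) ℂ))
    (hEk : ∀ k : Fin d, E k.succ = (√p : ℂ) • single z k 1) :
    ∃ w : Fin (d + 1) → ℂ, (∀ j, E j *ᵥ Pi.single z 1 = w j • Pi.single z 1) ∧
      ∑ j, ‖w j‖ ^ 2 = 1 := by
  refine ⟨Fin.cons (√(1 - p) : ℂ) fun k => if k = z then (√p : ℂ) else 0, fun j => ?_, ?_⟩
  · cases j using Fin.cases with
    | zero => rw [hE0, smul_mulVec, one_mulVec, Fin.cons_zero]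
    | succ k =>
      rw [hEk, smul_mulVec, single_mulVec, Fin.cons_succ]
      by_cases hk : k = z
      · subst hk; simp [Pi.single]
      · simp [hk, Pi.single]
  · simp [Fin.sum_univ_succ, apply_ite, Real.sq_sqrt hp0, Real.sq_sqrt (sub_nonneg.2 hp1)]

end ExampleChannel

/-- Example channel, transpose-channel fidelity loss (Example 5): for the channel on `ℂ^d`
with Kraus operators `E_0 = √(1−p) • 1` and `E_k = √p • |0⟩⟨k−1|` (`k = 1, …, d`, `p < 1`),
`E(1) = (1−p) • 1 + (p·d) • |0⟩⟨0|` is positive definite, the squared fidelity of the basis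
state `e₀` under the transpose channel (with `S = E(1)^{-1/2}`) composed with the noise is
`1/(1+(d−1)p)`, and hence the transpose-channel fidelity loss satisfies
`η_P ≥ (d−1)p/(1+(d−1)p)`. -/
theorem example_channel_transpose_recovery
    {d : ℕ} (hd : 2 ≤ d) (p : ℝ) (hp0 : 0 ≤ p) (hp1 : p < 1)
    (E : Fin (d + 1) → Matrix (Fin d) (Fin d) ℂ)
    (hE0 : E 0 = (Real.sqrt (1 - p) : ℂ) • (1 : Matrix (Fin d) (Fin d) ℂ))
    (hEk : ∀ k : Fin d, E k.succ
      = (Real.sqrt p : ℂ) • Matrix.single (⟨0, by omega⟩ : Fin d) k 1)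
    (T S : Matrix (Fin d) (Fin d) ℂ)
    (hT : T.PosSemidef) (hTsq : T * T = ∑ k, E k * (1 : Matrix (Fin d) (Fin d) ℂ) * (E k)ᴴ)
    (hS : S = T⁻¹) :
    (∑ k, E k * (1 : Matrix (Fin d) (Fin d) ℂ) * (E k)ᴴ
        = ((1 - p : ℝ) : ℂ) • (1 : Matrix (Fin d) (Fin d) ℂ)
          + ((p * d : ℝ) : ℂ) •
              Matrix.single (⟨0, by omega⟩ : Fin d) (⟨0, by omega⟩ : Fin d) 1) ∧
    (∑ k, E k * (1 : Matrix (Fin d) (Fin d) ℂ) * (E k)ᴴ).PosDef ∧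
    (∑ i, ∑ j, ‖
        (star (Pi.single (⟨0, by omega⟩ : Fin d) (1 : ℂ)) ⬝ᵥ
          (((E i)ᴴ * S * E j) *ᵥ Pi.single (⟨0, by omega⟩ : Fin d) (1 : ℂ)))‖ ^ 2
      = 1 / (1 + ((d : ℝ) - 1) * p)) ∧
    ((d : ℝ) - 1) * p / (1 + ((d : ℝ) - 1) * p)
      ≤ 1 - sInf {r : ℝ | ∃ ψ : Fin d → ℂ, star ψ ⬝ᵥ ψ = 1 ∧
          r = ∑ i, ∑ j, ‖(star ψ ⬝ᵥ (((E i)ᴴ * S * E j) *ᵥ ψ))‖ ^ 2} := by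
  set z : Fin d := ⟨0, by omega⟩
  set e : Fin d → ℂ := Pi.single z 1
  have hE1 := kraus_sum_mul_conjTranspose hp0 hp1.le hE0 hEk
  have hcoef : 1 - p + p * d = 1 + ((d : ℝ) - 1) * p := by ring
  have hpos : 0 < 1 + ((d : ℝ) - 1) * p := by
    nlinarith [show (1 : ℝ) ≤ d by exact_mod_cast (by omega : 1 ≤ d)]
  have hSe : S *ᵥ e = (((√(1 + ((d : ℝ) - 1) * p))⁻¹ : ℝ) : ℂ) • e := by
    rw [hS, inv_sqrt_mulVec_single z hT (by linarith) (by positivity) (hTsq.trans hE1), hcoef]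
  obtain ⟨w, hwE, hw⟩ := exists_kraus_mulVec_single_eq_smul hp0 hp1.le hE0 hEk
  have he : star e ⬝ᵥ e = 1 := by simp [e, dotProduct, Pi.single_apply]
  have hfid : transposeFidelitySq E S e = 1 / (1 + ((d : ℝ) - 1) * p) := by
    rw [transposeFidelitySq_of_mulVec_eq_smul S hwE, hw, hSe,
      dotProduct_smul, he]
    simp [Real.sq_sqrt hpos.le]
  refine ⟨hE1, hE1 ▸ posDef_idAddSingle z (by linarith) (by positivity), hfid, ?_⟩
  calc ((d : ℝ) - 1) * p / (1 + ((d : ℝ) - 1) * p) = 1 - transposeFidelitySq E S e := by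
        rw [hfid]; field_simp; ring
    _ ≤ _ := sub_le_sub_left (sInf_transposeFidelitySq_le E S he) 1
end

section
/- Alternate form of the perfect QEC conditions, forward direction (Theorem 6, Eq. 15): Under the diagonal perfect QEC conditions (P F_kᴴ F_l P = (if k = l then d_k else 0) • P with d_k > 0, and F_k P = (√d_k) • (U_k P) with U_k unitary), set P_k := U_k P U_kᴴ and S := ∑_{k∈K} (d_k)^{-1/2} • P_k (which is E(P)^{-1/2} for E(P) := ∑_k F_k P F_kᴴ). Then for all k, l ∈ K: P F_kᴴ S F_l P = (if k = l then √d_k else 0) • P. -/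
open Matrix

/-!
Write `V_k := U_k P`. The polar decomposition turns `F_k P` into `√d_k • V_k`, so the QEC
conditions say that the `V_k` have orthogonal ranges: `V_kᴴ V_l = δ_{kl} P`. Since `P` is an
orthogonal projection, `U_m P U_mᴴ = V_m V_mᴴ`, and sandwiching `S = ∑_m d_m^{-1/2} V_m V_mᴴ`
between `V_kᴴ` and `V_l` keeps only the term `m = k = l`, which leaves `√d_k √d_k d_k^{-1/2} P`.
-/

section

variable {ι K 𝕜 : Type*} [Fintype ι] [Fintype K] [DecidableEq K]

lemma conjTranspose_mul_sum_smul_mul_self_conjTranspose_mul [CommSemiring 𝕜] [Star 𝕜]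
    {P : Matrix ι ι 𝕜} (hP : P * P = P) {V : K → Matrix ι ι 𝕜}
    (hV : ∀ a b, (V a)ᴴ * V b = (if a = b then (1 : 𝕜) else 0) • P) (c : K → 𝕜) (k l : K) :
    (V k)ᴴ * (∑ m, c m • (V m * (V m)ᴴ)) * V l = (if k = l then c k else 0) • P := by
  have hterm : ∀ m, (V k)ᴴ * (c m • (V m * (V m)ᴴ)) * V l
      = (if k = m then if m = l then c m else 0 else 0) • P := by
    intro m
    calc (V k)ᴴ * (c m • (V m * (V m)ᴴ)) * V l
        = c m • (((V k)ᴴ * V m) * ((V m)ᴴ * V l)) := by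
          simp only [mul_smul_comm, smul_mul_assoc, Matrix.mul_assoc]
      _ = _ := by
          rw [hV, hV, smul_mul_smul_comm, hP, smul_smul]
          split_ifs <;> simp
  simp only [Matrix.mul_sum, Matrix.sum_mul, hterm, ← Finset.sum_smul]
  congr 1
  simp [Finset.sum_ite_eq]

lemma mul_mul_conjTranspose_eq_of_idempotent_of_hermitian [Semiring 𝕜] [StarRing 𝕜] {P : Matrix ι ι 𝕜}
    (hP1 : P * P = P) (hP2 : Pᴴ = P) (U : Matrix ι ι 𝕜) :
    U * P * Uᴴ = U * P * (U * P)ᴴ := by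
  rw [conjTranspose_mul, hP2, ← Matrix.mul_assoc, Matrix.mul_assoc U P P, hP1]

end

lemma conjTranspose_ofReal_smul {m n : Type*} (r : ℝ) (M : Matrix m n ℂ) :
    ((r : ℂ) • M)ᴴ = (r : ℂ) • Mᴴ := by
  rw [conjTranspose_smul, Complex.star_def, Complex.conj_ofReal]

lemma conjTranspose_mul_eq_of_sqrt_smul {ι K : Type*} [Fintype ι] [DecidableEq K]
    {P : Matrix ι ι ℂ} {d : K → ℝ} (hd : ∀ k, 0 < d k) {W V : K → Matrix ι ι ℂ}
    (hWV : ∀ k, W k = (Real.sqrt (d k) : ℂ) • V k)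
    (hW : ∀ k l, (W k)ᴴ * W l = (if k = l then (d k : ℂ) else 0) • P) (k l : K) :
    (V k)ᴴ * V l = (if k = l then (1 : ℂ) else 0) • P := by
  have hs : ∀ k, (Real.sqrt (d k) : ℂ) ≠ 0 := fun k =>
    Complex.ofReal_ne_zero.2 (Real.sqrt_pos.2 (hd k)).ne'
  have h := hW k l
  rw [hWV, hWV, conjTranspose_ofReal_smul, smul_mul_smul_comm] at h
  refine smul_right_injective _ (mul_ne_zero (hs k) (hs l)) ?_
  simp only [h, smul_smul]
  split_ifs with hkl
  · subst hkl
    rw [mul_one, ← Complex.ofReal_mul, Real.mul_self_sqrt (hd k).le]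
  · simp

theorem alternate_QEC_conditions_forward_general
    {n : ℕ} {K : Type*} [Fintype K] [DecidableEq K]
    (F : K → Matrix (Fin n) (Fin n) ℂ) (U : K → Matrix (Fin n) (Fin n) ℂ)
    (P : Matrix (Fin n) (Fin n) ℂ) (d : K → ℝ)
    (hP1 : P * P = P) (hP2 : Pᴴ = P)
    (hd : ∀ k, 0 < d k)
    (hQEC : ∀ k l, P * (F k)ᴴ * F l * P = (if k = l then (d k : ℂ) else 0) • P)
    (hpolar : ∀ k, F k * P = (Real.sqrt (d k) : ℂ) • (U k * P)) :
    ∀ k l, P * (F k)ᴴ *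
        (∑ m, (((Real.sqrt (d m))⁻¹ : ℝ) : ℂ) • (U m * P * (U m)ᴴ)) * F l * P
      = (if k = l then (Real.sqrt (d k) : ℂ) else 0) • P := by
  have hPF : ∀ k, P * (F k)ᴴ = (F k * P)ᴴ := fun k => by rw [conjTranspose_mul, hP2]
  have horth := conjTranspose_mul_eq_of_sqrt_smul hd hpolar fun k l => by
    rw [← hPF, ← Matrix.mul_assoc, hQEC]
  intro k l
  set S := ∑ m, (((Real.sqrt (d m))⁻¹ : ℝ) : ℂ) • (U m * P * (U m)ᴴ)
  have hS : S = ∑ m, (((Real.sqrt (d m))⁻¹ : ℝ) : ℂ) • (U m * P * (U m * P)ᴴ) := by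
    simp only [S, mul_mul_conjTranspose_eq_of_idempotent_of_hermitian hP1 hP2]
  calc P * (F k)ᴴ * S * F l * P = (F k * P)ᴴ * S * (F l * P) := by
        rw [hPF, Matrix.mul_assoc _ (F l)]
    _ = ((Real.sqrt (d k) * Real.sqrt (d l) : ℝ) : ℂ) • ((U k * P)ᴴ * S * (U l * P)) := by
        rw [hpolar, hpolar, conjTranspose_ofReal_smul, Complex.ofReal_mul]
        simp only [smul_mul_assoc, mul_smul_comm, smul_smul]
        ring_nf
    _ = _ := by
        rw [hS, conjTranspose_mul_sum_smul_mul_self_conjTranspose_mul hP1 horth, smul_smul]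
        congr 1
        split_ifs with hkl
        · subst hkl
          have hs : Real.sqrt (d k) ≠ 0 := (Real.sqrt_pos.2 (hd k)).ne'
          push_cast
          field_simp
        · simp

/-- Alternate form of the perfect QEC conditions, forward direction (Theorem 6, Eq. 15):
under the diagonal perfect QEC conditions, with `P_k := U_k P U_kᴴ` and
`S := ∑_k (d_k)^{-1/2} • P_k` (which is `E(P)^{-1/2}`), one has
`P F_kᴴ S F_l P = δ_{kl} √d_k • P`. -/
theorem alternate_QEC_conditions_forward
    {n : ℕ} {K : Type*} [Fintype K] [DecidableEq K]
    (F : K → Matrix (Fin n) (Fin n) ℂ) (U : K → Matrix (Fin n) (Fin n) ℂ)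
    (P : Matrix (Fin n) (Fin n) ℂ) (d : K → ℝ)
    (hP1 : P * P = P) (hP2 : Pᴴ = P) (hP0 : P ≠ 0)
    (hd : ∀ k, 0 < d k)
    (hQEC : ∀ k l, P * (F k)ᴴ * F l * P = (if k = l then (d k : ℂ) else 0) • P)
    (hU : ∀ k, U k * (U k)ᴴ = 1 ∧ (U k)ᴴ * U k = 1)
    (hpolar : ∀ k, F k * P = (Real.sqrt (d k) : ℂ) • (U k * P)) :
    ∀ k l, P * (F k)ᴴ *
        (∑ m, (((Real.sqrt (d m))⁻¹ : ℝ) : ℂ) • (U m * P * (U m)ᴴ)) * F l * P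
      = (if k = l then (Real.sqrt (d k) : ℂ) else 0) • P :=
  alternate_QEC_conditions_forward_general F U P d hP1 hP2 hd hQEC hpolar
end

section
/- Alternate form of the perfect QEC conditions, converse direction (Theorem 6): Let {F_k}_{k∈K} be a finite Kraus family on ℂⁿ, P a nonzero orthogonal projection, E(P) := ∑_k F_k P F_kᴴ, T the positive semidefinite square root of E(P), and S the Moore–Penrose pseudoinverse of T. Suppose there are reals d_k > 0 such that P F_kᴴ S F_l P = (if k = l then √d_k else 0) • P for all k, l ∈ K. Then P F_kᴴ F_l P = (if k = l then d_k else 0) • P for all k, l ∈ K; i.e., the code satisfies the perfect QEC conditions in diagonal form. -/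
open Matrix
open scoped ComplexOrder

/-!
With `B m := F m * P` we have `T * T = ∑ m, B m * (B m)ᴴ`. Putting `A := 1 - T * S`, the
identity `T * S * T = T` gives `A * T = 0`, so `∑ m, (A * B m) * (A * B m)ᴴ = (A * T) * (A * T)ᴴ`
vanishes and hence every `A * B m` does: `T * S` acts as the identity on the ranges of the `B m`.
Therefore `(B k)ᴴ * B l = (B k)ᴴ * S * (T * T) * S * B l`, and expanding `T * T` writes the
Knill–Laflamme matrix `P * (F k)ᴴ * F l * P` as a sum of products of the given matrices
`P * (F k)ᴴ * S * F m * P = δ_{km} √(d k) • P`.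
-/

namespace Matrix

variable {ι m n p R : Type*} [Fintype ι] [Fintype m] [Fintype n] [Fintype p]
  [Ring R] [PartialOrder R] [StarRing R] [StarOrderedRing R] [NoZeroDivisors R]

theorem sum_mul_conjTranspose_self_eq_zero_iff {B : ι → Matrix m n R} :
    ∑ i, B i * (B i)ᴴ = 0 ↔ ∀ i, B i = 0 := by
  refine ⟨fun h i => ?_, fun h => by simp [h]⟩
  have htrace : ∑ j, (B j * (B j)ᴴ).trace = 0 := by rw [← trace_sum, h, trace_zero]
  have hnonneg : ∀ j, 0 ≤ (B j * (B j)ᴴ).trace :=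
    fun j => (posSemidef_self_mul_conjTranspose (B j)).trace_nonneg
  exact trace_mul_conjTranspose_self_eq_zero_iff.1
    (congrFun ((Fintype.sum_eq_zero_iff_of_nonneg hnonneg).1 htrace) i)

variable {T S : Matrix n n R} {B : ι → Matrix n p R}

theorem mul_mul_eq_self_of_mul_self_eq_sum (hT : Tᴴ = T) (hTST : T * S * T = T)
    (hTT : T * T = ∑ i, B i * (B i)ᴴ) (i : ι) : T * S * B i = B i := by
  classical
  set A : Matrix n n R := 1 - T * S with hA
  have hAT : A * T = 0 := by rw [sub_mul, one_mul, hTST, sub_self]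
  have hsum : ∑ j, (A * B j) * (A * B j)ᴴ = 0 :=
    calc ∑ j, (A * B j) * (A * B j)ᴴ = A * (∑ j, B j * (B j)ᴴ) * Aᴴ := by
          simp only [conjTranspose_mul, Finset.mul_sum, Finset.sum_mul, Matrix.mul_assoc]
      _ = (A * T) * (A * T)ᴴ := by rw [← hTT, conjTranspose_mul, hT]; noncomm_ring
      _ = 0 := by rw [hAT, zero_mul]
  have hAB := (sum_mul_conjTranspose_self_eq_zero_iff.1 hsum) i
  rw [hA, Matrix.sub_mul, Matrix.one_mul, sub_eq_zero] at hAB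
  exact hAB.symm

theorem conjTranspose_mul_eq_sum_of_mul_self_eq_sum (hT : Tᴴ = T) (hS : Sᴴ = S)
    (hTST : T * S * T = T) (hTT : T * T = ∑ i, B i * (B i)ᴴ) (k l : ι) :
    (B k)ᴴ * B l = ∑ i, ((B k)ᴴ * S * B i) * ((B i)ᴴ * S * B l) := by
  have hl := mul_mul_eq_self_of_mul_self_eq_sum hT hTST hTT l
  have hk : (B k)ᴴ * S * T = (B k)ᴴ := by
    simpa only [conjTranspose_mul, hT, hS, Matrix.mul_assoc] using
      congrArg conjTranspose (mul_mul_eq_self_of_mul_self_eq_sum hT hTST hTT k)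
  calc (B k)ᴴ * B l = ((B k)ᴴ * S * T) * (T * S * B l) := by rw [hk, hl]
    _ = (B k)ᴴ * S * (T * T) * S * B l := by simp only [Matrix.mul_assoc]
    _ = ∑ i, ((B k)ᴴ * S * B i) * ((B i)ᴴ * S * B l) := by
      simp only [hTT, Matrix.mul_sum, Matrix.sum_mul, Matrix.mul_assoc]

end Matrix

theorem sum_ite_smul_mul_ite_smul {K R A : Type*} [Fintype K] [DecidableEq K]
    [CommSemiring R] [Semiring A] [Algebra R A] {P : A} (hP : P * P = P) (a : K → R) (k l : K) :
    ∑ m, ((if k = m then a k else 0) • P) * ((if m = l then a m else 0) • P)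
      = (if k = l then a k * a k else 0) • P := by
  rw [Finset.sum_eq_single l (fun m _ hm => by simp [hm]) (by simp)]
  by_cases h : k = l
  · subst h
    simp only [if_true, smul_mul_smul_comm, hP]
  · simp [h]

theorem alternate_QEC_conditions_converse_general
    {n : ℕ} {K : Type*} [Fintype K] [DecidableEq K]
    (F : K → Matrix (Fin n) (Fin n) ℂ)
    (P T S : Matrix (Fin n) (Fin n) ℂ) (d : K → ℝ)
    (hP1 : P * P = P) (hP2 : Pᴴ = P)
    (hT : T.PosSemidef) (hTsq : T * T = ∑ k, F k * P * (F k)ᴴ)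
    (hS : S.PosSemidef) (hTST : T * S * T = T)
    (hd : ∀ k, 0 < d k)
    (halt : ∀ k l, P * (F k)ᴴ * S * F l * P
      = (if k = l then (Real.sqrt (d k) : ℂ) else 0) • P) :
    ∀ k l, P * (F k)ᴴ * F l * P = (if k = l then (d k : ℂ) else 0) • P := by
  intro k l
  have hTT : T * T = ∑ m, (F m * P) * (F m * P)ᴴ := by
    simp only [hTsq, conjTranspose_mul, hP2, ← mul_assoc, mul_assoc _ P P, hP1]
  calc P * (F k)ᴴ * F l * P = (F k * P)ᴴ * (F l * P) := by
        rw [conjTranspose_mul, hP2, ← mul_assoc]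
    _ = ∑ m, (P * (F k)ᴴ * S * F m * P) * (P * (F m)ᴴ * S * F l * P) := by
        rw [conjTranspose_mul_eq_sum_of_mul_self_eq_sum (B := fun m => F m * P) hT.1.eq hS.1.eq
          hTST hTT]
        simp only [conjTranspose_mul, hP2, mul_assoc]
    _ = (if k = l then (d k : ℂ) else 0) • P := by
        simp only [halt]
        rw [sum_ite_smul_mul_ite_smul hP1 (fun m => (Real.sqrt (d m) : ℂ)), ← Complex.ofReal_mul,
          Real.mul_self_sqrt (hd k).le]

/-- Alternate form of the perfect QEC conditions, converse direction (Theorem 6): if the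
Kraus operators of the transpose channel composed with the noise satisfy
`P F_kᴴ S F_l P = δ_{kl} √d_k • P` with `d_k > 0`, where `T = sqrt(E(P))` and `S` is its
Moore–Penrose pseudoinverse, then the code satisfies the perfect QEC conditions in
diagonal form: `P F_kᴴ F_l P = δ_{kl} d_k • P`. -/
theorem alternate_QEC_conditions_converse
    {n : ℕ} {K : Type*} [Fintype K] [DecidableEq K]
    (F : K → Matrix (Fin n) (Fin n) ℂ)
    (P T S : Matrix (Fin n) (Fin n) ℂ) (d : K → ℝ)
    (hP1 : P * P = P) (hP2 : Pᴴ = P) (hP0 : P ≠ 0)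
    (hT : T.PosSemidef) (hTsq : T * T = ∑ k, F k * P * (F k)ᴴ)
    (hS : S.PosSemidef) (hSTS : S * T * S = S) (hTST : T * S * T = T)
    (hcomm : S * T = T * S)
    (hd : ∀ k, 0 < d k)
    (halt : ∀ k l, P * (F k)ᴴ * S * F l * P
      = (if k = l then (Real.sqrt (d k) : ℂ) else 0) • P) :
    ∀ k l, P * (F k)ᴴ * F l * P = (if k = l then (d k : ℂ) else 0) • P :=
  alternate_QEC_conditions_converse_general F P T S d hP1 hP2 hT hTsq hS hTST hd halt
end

section
/- Fidelity-loss identity underlying the AQEC conditions (Theorem 7, Eq. 17): Let A_{ij} (i, j ∈ I, I finite) be n×n complex matrices with ∑_{i,j} A_{ij}ᴴ A_{ij} = P, where P is an orthogonal projection. Given any complex numbers β_{ij}, set Δ_{ij} := A_{ij} − β_{ij} • P. Then for every unit vector ψ with P ψ = ψ: 1 − ∑_{i,j∈I} |⟨ψ, A_{ij} ψ⟩|² = ∑_{i,j∈I} ( ⟨ψ, Δ_{ij}ᴴ Δ_{ij} ψ⟩ − |⟨ψ, Δ_{ij} ψ⟩|² ). In particular, with A_{ij} = P E_iᴴ E(P)^{-1/2}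 E_j P the Kraus operators of the transpose channel composed with a TP noise channel, the fidelity loss of the transpose channel on the code equals the maximum of the right-hand side over pure code states. -/
open Matrix
open scoped InnerProductSpace

/-! For a unit vector `ψ`, `‖w‖² - |⟪ψ, w⟫|²` is the squared norm of the component of `w`
orthogonal to `ψ`, so it does not change when a multiple of `ψ` is subtracted from `w`. On a code
state `Δ_{ij} ψ = A_{ij} ψ - β_{ij} ψ`, hence each summand on the right equals
`‖A_{ij} ψ‖² - |⟪ψ, A_{ij} ψ⟫|²`, and `∑ ‖A_{ij} ψ‖² = ⟪ψ, P ψ⟫ = 1`. -/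

section InnerProductSpace

variable {𝕜 E : Type*} [RCLike 𝕜] [NormedAddCommGroup E] [InnerProductSpace 𝕜 E]

theorem norm_sq_sub_norm_inner_sq_eq_norm_sub_smul_sq {ψ : E} (hψ : ‖ψ‖ = 1) (w : E) :
    ‖w‖ ^ 2 - ‖⟪ψ, w⟫_𝕜‖ ^ 2 = ‖w - ⟪ψ, w⟫_𝕜 • ψ‖ ^ 2 := by
  rw [@norm_sub_sq 𝕜, inner_smul_right, ← inner_conj_symm, RCLike.conj_mul, norm_smul, hψ]
  norm_cast
  rw [RCLike.norm_conj]
  ring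

theorem norm_sub_smul_sq_sub_norm_inner_sq {ψ : E} (hψ : ‖ψ‖ = 1) (v : E) (c : 𝕜) :
    ‖v - c • ψ‖ ^ 2 - ‖⟪ψ, v - c • ψ⟫_𝕜‖ ^ 2 = ‖v‖ ^ 2 - ‖⟪ψ, v⟫_𝕜‖ ^ 2 := by
  have hψψ : ⟪ψ, ψ⟫_𝕜 = 1 := by simp [inner_self_eq_norm_sq_to_K, hψ]
  rw [norm_sq_sub_norm_inner_sq_eq_norm_sub_smul_sq hψ,
    norm_sq_sub_norm_inner_sq_eq_norm_sub_smul_sq hψ, inner_sub_right, inner_smul_right, hψψ, mul_one, sub_smul, sub_sub_sub_cancel_right]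

end InnerProductSpace

section Matrix

variable {𝕜 m : Type*} [RCLike 𝕜] [Fintype m]

theorem star_dotProduct_eq_inner (u v : m → 𝕜) :
    star u ⬝ᵥ v = ⟪WithLp.toLp 2 u, WithLp.toLp 2 v⟫_𝕜 := by
  rw [EuclideanSpace.inner_toLp_toLp, dotProduct_comm]

theorem re_star_dotProduct_self (v : m → 𝕜) :
    RCLike.re (star v ⬝ᵥ v) = ‖WithLp.toLp 2 v‖ ^ 2 := by
  rw [star_dotProduct_eq_inner, ← norm_sq_eq_re_inner]

theorem star_dotProduct_conjTranspose_mul_mulVec (M : Matrix m m 𝕜) (ψ : m → 𝕜) :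
    star ψ ⬝ᵥ ((Mᴴ * M) *ᵥ ψ) = star (M *ᵥ ψ) ⬝ᵥ (M *ᵥ ψ) := by
  rw [star_mulVec, ← dotProduct_mulVec, mulVec_mulVec]

def stateVariance (ψ : m → 𝕜) (M : Matrix m m 𝕜) : ℝ :=
  RCLike.re (star ψ ⬝ᵥ ((Mᴴ * M) *ᵥ ψ)) - ‖star ψ ⬝ᵥ (M *ᵥ ψ)‖ ^ 2

theorem stateVariance_sub_smul {P : Matrix m m 𝕜} {ψ : m → 𝕜}
    (hψ : star ψ ⬝ᵥ ψ = 1) (hPψ : P *ᵥ ψ = ψ) (M : Matrix m m 𝕜) (c : 𝕜) :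
    stateVariance ψ (M - c • P) = stateVariance ψ M := by
  have hnorm : ‖WithLp.toLp 2 ψ‖ = 1 := by
    rw [← pow_eq_one_iff_of_nonneg (norm_nonneg _) two_ne_zero, ← re_star_dotProduct_self, hψ,
      RCLike.one_re]
  simp only [stateVariance, star_dotProduct_conjTranspose_mul_mulVec, re_star_dotProduct_self]
  simp only [star_dotProduct_eq_inner, sub_mulVec, smul_mulVec, hPψ, WithLp.toLp_sub,
    WithLp.toLp_smul]
  exact norm_sub_smul_sq_sub_norm_inner_sq hnorm _ _

end Matrix

theorem AQEC_fidelity_loss_identity_general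
    {n : ℕ} {I : Type*} [Fintype I]
    (A : I → I → Matrix (Fin n) (Fin n) ℂ) (β : I → I → ℂ)
    (Δ : I → I → Matrix (Fin n) (Fin n) ℂ)
    (P : Matrix (Fin n) (Fin n) ℂ)
    (hATP : ∑ i, ∑ j, (A i j)ᴴ * A i j = P)
    (hΔ : ∀ i j, Δ i j = A i j - β i j • P) :
    ∀ ψ : Fin n → ℂ, star ψ ⬝ᵥ ψ = 1 → P *ᵥ ψ = ψ →
      1 - ∑ i, ∑ j, ‖star ψ ⬝ᵥ (A i j *ᵥ ψ)‖ ^ 2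
        = ∑ i, ∑ j, ((star ψ ⬝ᵥ (((Δ i j)ᴴ * Δ i j) *ᵥ ψ)).re
            - ‖star ψ ⬝ᵥ (Δ i j *ᵥ ψ)‖ ^ 2) := by
  intro ψ hψ hPψ
  have htrace_preserving : ∑ i, ∑ j, (star ψ ⬝ᵥ (((A i j)ᴴ * A i j) *ᵥ ψ)).re = 1 := by
    simp_rw [← Complex.re_sum, ← dotProduct_sum, ← sum_mulVec, hATP, hPψ, hψ, Complex.one_re]
  have hvariance : ∀ i j, stateVariance ψ (Δ i j) = stateVariance ψ (A i j) := fun i j => by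
    rw [hΔ, stateVariance_sub_smul hψ hPψ]
  simp only [stateVariance, RCLike.re_to_complex] at hvariance
  simp only [hvariance, Finset.sum_sub_distrib, htrace_preserving]

/-- Fidelity-loss identity underlying the AQEC conditions (Theorem 7, Eq. 17): if
`∑_{ij} A_{ij}ᴴ A_{ij} = P` for an orthogonal projection `P`, and `Δ_{ij} := A_{ij} − β_{ij} • P`,
then for every pure code state `ψ`,
`1 − ∑_{ij} |⟨ψ, A_{ij} ψ⟩|² = ∑_{ij} (⟨ψ, Δ_{ij}ᴴ Δ_{ij} ψ⟩ − |⟨ψ, Δ_{ij} ψ⟩|²)`. -/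
theorem AQEC_fidelity_loss_identity
    {n : ℕ} {I : Type*} [Fintype I]
    (A : I → I → Matrix (Fin n) (Fin n) ℂ) (β : I → I → ℂ)
    (Δ : I → I → Matrix (Fin n) (Fin n) ℂ)
    (P : Matrix (Fin n) (Fin n) ℂ)
    (hP1 : P * P = P) (hP2 : Pᴴ = P)
    (hATP : ∑ i, ∑ j, (A i j)ᴴ * A i j = P)
    (hΔ : ∀ i j, Δ i j = A i j - β i j • P) :
    ∀ ψ : Fin n → ℂ, star ψ ⬝ᵥ ψ = 1 → P *ᵥ ψ = ψ →
      1 - ∑ i, ∑ j, ‖star ψ ⬝ᵥ (A i j *ᵥ ψ)‖ ^ 2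
        = ∑ i, ∑ j, ((star ψ ⬝ᵥ (((Δ i j)ᴴ * Δ i j) *ᵥ ψ)).re
            - ‖star ψ ⬝ᵥ (Δ i j *ᵥ ψ)‖ ^ 2) :=
  AQEC_fidelity_loss_identity_general A β Δ P hATP hΔ
end

section
/- Sufficient AQEC condition via the operator Δ_sum (Corollary 8): Let A_{ij} (i, j ∈ I, I finite) be n×n complex matrices with ∑_{i,j} A_{ij}ᴴ A_{ij} = P, where P is an orthogonal projection, let β_{ij} be complex numbers, and set Δ_{ij} := A_{ij} − β_{ij} • P and Δ_sum := ∑_{i,j} Δ_{ij}ᴴ Δ_{ij}. Then for every unit vector ψ with P ψ = ψ: 1 − ∑_{i,j∈I} |⟨ψ, A_{ij} ψ⟩|² ≤ ⟨ψ, Δ_sum ψ⟩. Consequently, if ε ≥ 0 and ε • 1 − Δ_sum is positive semidefinite (i.e., ‖Δ_sum‖ ≤ ε), then 1 − ∑_{i,j} |⟨ψ, A_{ij} ψ⟩|² ≤ ε for every pure code state ψ, so the code is ε-correctable using the map with Kraus operators {A_{ij}}. -/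
/-!
For a code state `ψ` and a Kraus operator `K`, `⟨ψ, KᴴK ψ⟩ - |⟨ψ, K ψ⟩|²` is the squared
distance from `Kψ` to the line `ℂψ`, hence at most `‖Kψ - βψ‖² = ‖(K - βP)ψ‖²` for every `β`.
Summing over the Kraus operators, the left-hand sides add up to the fidelity loss, since
`∑ KᴴK = P` fixes `ψ`, and the right-hand sides to `⟨ψ, Δ_sum ψ⟩`.
-/

open Matrix
open scoped ComplexOrder

section

variable {m κ : Type*} [Fintype m]

lemma dotProduct_conjTranspose_mul_self_mulVec (M : Matrix m m ℂ) (ψ : m → ℂ) :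
    star ψ ⬝ᵥ ((Mᴴ * M) *ᵥ ψ) = star (M *ᵥ ψ) ⬝ᵥ (M *ᵥ ψ) := by
  rw [← mulVec_mulVec, dotProduct_mulVec, ← star_mulVec]

/-- With `a := ⟨ψ, v⟩`, one has `‖v - b ψ‖² = ‖v‖² - |a|² + |b - a|²`. -/
lemma re_dotProduct_self_sub_norm_sq_le {ψ : m → ℂ} (hψ : star ψ ⬝ᵥ ψ = 1) (v : m → ℂ)
    (b : ℂ) :
    (star v ⬝ᵥ v).re - ‖star ψ ⬝ᵥ v‖ ^ 2 ≤ (star (v - b • ψ) ⬝ᵥ (v - b • ψ)).re := by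
  set a := star ψ ⬝ᵥ v
  have hconj : star v ⬝ᵥ ψ = starRingEnd ℂ a := by
    rw [star_dotProduct]; rfl
  have expand : star (v - b • ψ) ⬝ᵥ (v - b • ψ)
      = star v ⬝ᵥ v - b * starRingEnd ℂ a - starRingEnd ℂ b * a + starRingEnd ℂ b * b := by
    simp only [star_sub, star_smul, sub_dotProduct, dotProduct_sub, smul_dotProduct,
      dotProduct_smul, hψ, hconj, smul_eq_mul, RCLike.star_def]
    ring
  rw [expand, Complex.sq_norm]
  simp only [Complex.sub_re, Complex.add_re, Complex.mul_re, Complex.conj_re,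
    Complex.conj_im, Complex.normSq_apply]
  nlinarith [sq_nonneg (b.re - a.re), sq_nonneg (b.im - a.im)]

lemma re_dotProduct_conjTranspose_mul_self_sub_norm_sq_le {P : Matrix m m ℂ} {ψ : m → ℂ}
    (hψ : star ψ ⬝ᵥ ψ = 1) (hPψ : P *ᵥ ψ = ψ) (K : Matrix m m ℂ) (b : ℂ) :
    (star ψ ⬝ᵥ ((Kᴴ * K) *ᵥ ψ)).re - ‖star ψ ⬝ᵥ (K *ᵥ ψ)‖ ^ 2
      ≤ (star ψ ⬝ᵥ (((K - b • P)ᴴ * (K - b • P)) *ᵥ ψ)).re := by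
  have hsub : (K - b • P) *ᵥ ψ = K *ᵥ ψ - b • ψ := by
    rw [sub_mulVec, smul_mulVec, hPψ]
  rw [dotProduct_conjTranspose_mul_self_mulVec, dotProduct_conjTranspose_mul_self_mulVec, hsub]
  exact re_dotProduct_self_sub_norm_sq_le hψ _ b

theorem one_sub_sum_norm_sq_le [Fintype κ] {K : κ → Matrix m m ℂ} {P : Matrix m m ℂ}
    (hK : ∑ k, (K k)ᴴ * K k = P) (β : κ → ℂ) {ψ : m → ℂ} (hψ : star ψ ⬝ᵥ ψ = 1)
    (hPψ : P *ᵥ ψ = ψ) :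
    1 - ∑ k, ‖star ψ ⬝ᵥ (K k *ᵥ ψ)‖ ^ 2
      ≤ (star ψ ⬝ᵥ ((∑ k, (K k - β k • P)ᴴ * (K k - β k • P)) *ᵥ ψ)).re := by
  calc 1 - ∑ k, ‖star ψ ⬝ᵥ (K k *ᵥ ψ)‖ ^ 2
      = ∑ k, ((star ψ ⬝ᵥ (((K k)ᴴ * K k) *ᵥ ψ)).re - ‖star ψ ⬝ᵥ (K k *ᵥ ψ)‖ ^ 2) := by
        rw [Finset.sum_sub_distrib, ← Complex.re_sum, ← dotProduct_sum, ← sum_mulVec, hK,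
          hPψ, hψ, Complex.one_re]
    _ ≤ ∑ k, (star ψ ⬝ᵥ (((K k - β k • P)ᴴ * (K k - β k • P)) *ᵥ ψ)).re :=
        Finset.sum_le_sum fun k _ ↦
          re_dotProduct_conjTranspose_mul_self_sub_norm_sq_le hψ hPψ (K k) (β k)
    _ = _ := by rw [sum_mulVec, dotProduct_sum, Complex.re_sum]

lemma re_dotProduct_mulVec_le_of_posSemidef_smul_one_sub [DecidableEq m] {D : Matrix m m ℂ}
    {ε : ℝ} (hD : ((ε : ℂ) • 1 - D).PosSemidef) {ψ : m → ℂ} (hψ : star ψ ⬝ᵥ ψ = 1) :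
    (star ψ ⬝ᵥ (D *ᵥ ψ)).re ≤ ε := by
  have h := (Complex.le_def.mp (hD.dotProduct_mulVec_nonneg ψ)).1
  rw [sub_mulVec, dotProduct_sub, smul_mulVec, one_mulVec, dotProduct_smul, hψ,
    smul_eq_mul, mul_one] at h
  simpa using h

end

theorem AQEC_sufficient_condition_Delta_sum_general
    {n : ℕ} {I : Type*} [Fintype I]
    (A : I → I → Matrix (Fin n) (Fin n) ℂ) (β : I → I → ℂ)
    (Δ : I → I → Matrix (Fin n) (Fin n) ℂ)
    (P Δsum : Matrix (Fin n) (Fin n) ℂ)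
    (hATP : ∑ i, ∑ j, (A i j)ᴴ * A i j = P)
    (hΔ : ∀ i j, Δ i j = A i j - β i j • P)
    (hΔsum : Δsum = ∑ i, ∑ j, (Δ i j)ᴴ * Δ i j) :
    (∀ ψ : Fin n → ℂ, star ψ ⬝ᵥ ψ = 1 → P *ᵥ ψ = ψ →
      1 - ∑ i, ∑ j, ‖star ψ ⬝ᵥ (A i j *ᵥ ψ)‖ ^ 2
        ≤ (star ψ ⬝ᵥ (Δsum *ᵥ ψ)).re) ∧
    (∀ ε : ℝ, 0 ≤ ε → ((ε : ℂ) • (1 : Matrix (Fin n) (Fin n) ℂ) - Δsum).PosSemidef →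
      ∀ ψ : Fin n → ℂ, star ψ ⬝ᵥ ψ = 1 → P *ᵥ ψ = ψ →
        1 - ∑ i, ∑ j, ‖star ψ ⬝ᵥ (A i j *ᵥ ψ)‖ ^ 2 ≤ ε) := by
  have fidelity_loss_le : ∀ ψ : Fin n → ℂ, star ψ ⬝ᵥ ψ = 1 → P *ᵥ ψ = ψ →
      1 - ∑ i, ∑ j, ‖star ψ ⬝ᵥ (A i j *ᵥ ψ)‖ ^ 2 ≤ (star ψ ⬝ᵥ (Δsum *ᵥ ψ)).re := by
    intro ψ hψ hPψ
    rw [← Fintype.sum_prod_type'] at hATP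
    simpa only [hΔsum, hΔ, Fintype.sum_prod_type] using
      one_sub_sum_norm_sq_le hATP (fun p ↦ β p.1 p.2) hψ hPψ
  exact ⟨fidelity_loss_le, fun ε _ hε ψ hψ hPψ ↦ (fidelity_loss_le ψ hψ hPψ).trans
    (re_dotProduct_mulVec_le_of_posSemidef_smul_one_sub hε hψ)⟩

/-- Sufficient AQEC condition via the operator `Δ_sum` (Corollary 8): if
`∑_{ij} A_{ij}ᴴ A_{ij} = P` and `Δ_{ij} := A_{ij} − β_{ij} • P`, with
`Δ_sum := ∑_{ij} Δ_{ij}ᴴ Δ_{ij}`, then for every pure code state `ψ`,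
`1 − ∑_{ij} |⟨ψ, A_{ij} ψ⟩|² ≤ ⟨ψ, Δ_sum ψ⟩`; consequently, if `ε ≥ 0` and
`ε • 1 − Δ_sum` is positive semidefinite (`‖Δ_sum‖ ≤ ε`), then the fidelity loss is at
most `ε` on every pure code state, i.e. the code is `ε`-correctable. -/
theorem AQEC_sufficient_condition_Delta_sum
    {n : ℕ} {I : Type*} [Fintype I]
    (A : I → I → Matrix (Fin n) (Fin n) ℂ) (β : I → I → ℂ)
    (Δ : I → I → Matrix (Fin n) (Fin n) ℂ)
    (P Δsum : Matrix (Fin n) (Fin n) ℂ)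
    (hP1 : P * P = P) (hP2 : Pᴴ = P)
    (hATP : ∑ i, ∑ j, (A i j)ᴴ * A i j = P)
    (hΔ : ∀ i j, Δ i j = A i j - β i j • P)
    (hΔsum : Δsum = ∑ i, ∑ j, (Δ i j)ᴴ * Δ i j) :
    (∀ ψ : Fin n → ℂ, star ψ ⬝ᵥ ψ = 1 → P *ᵥ ψ = ψ →
      1 - ∑ i, ∑ j, ‖star ψ ⬝ᵥ (A i j *ᵥ ψ)‖ ^ 2
        ≤ (star ψ ⬝ᵥ (Δsum *ᵥ ψ)).re) ∧
    (∀ ε : ℝ, 0 ≤ ε → ((ε : ℂ) • (1 : Matrix (Fin n) (Fin n) ℂ) - Δsum).PosSemidef →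
      ∀ ψ : Fin n → ℂ, star ψ ⬝ᵥ ψ = 1 → P *ᵥ ψ = ψ →
        1 - ∑ i, ∑ j, ‖star ψ ⬝ᵥ (A i j *ᵥ ψ)‖ ^ 2 ≤ ε) :=
  AQEC_sufficient_condition_Delta_sum_general A β Δ P Δsum hATP hΔ hΔsum
end
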